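/- arXiv:math/9509217 — 4 statements merged into one kernel-verified Lean document; each statement's English description precedes it below -/
import Mathlib

section
/- Let X be a topological space, I a set, and (φ_i)_{i∈I}, (ψ_i)_{i∈I} uniformly bounded families of lower semicontinuous real-valued functions on X. Define φ(f) = sup_{i∈I} φ_i(f), θ_m(f) = sup_{i∈I} [φ_i(f) + 2^{−m} ψ_i(f)] for m ≥ 1, and θ(f) = Σ_{m=1}^∞ 2^{−m} θ_m(f). If (f_n) is a sequence converging to f in X with θ(f_n) → θ(f), then there exists a sequence (i_n) in I such that φ_{i_n}(f) → φ(f), φ_{i_n}(f_n) → φ(f), φ(f_n) → φ(f), and ψ_{i_n}(f_n) − ψ_{i_n}(f) → 0 as n → ∞. Moreover, if I carries a topology in which it is sequentially compact, the sequence (i_n) may be chosen to be convergent in that topology. -/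
open Filter Topology

private lemma aux_coord (w : ℕ → ℕ → ℝ) (v : ℕ → ℝ) (C : ℝ)
    (hwb : ∀ n m, |w n m| ≤ (1/2:ℝ)^m * C) (hvb : ∀ m, |v m| ≤ (1/2:ℝ)^m * C)
    (hlow : ∀ m, ∀ ε : ℝ, 0 < ε → ∀ᶠ n in atTop, v m - ε < w n m)
    (hsum : Tendsto (fun n => ∑' m, w n m) atTop (𝓝 (∑' m, v m))) (K : ℕ) :
    Tendsto (fun n => w n K) atTop (𝓝 (v K)) := by
  classical
  have hgeo : Summable (fun m : ℕ => (1/2:ℝ)^m * C) :=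
    (summable_geometric_of_lt_one (by norm_num) (by norm_num)).mul_right C
  have hws : ∀ n, Summable (w n) := fun n =>
    Summable.of_abs (Summable.of_nonneg_of_le (fun m => abs_nonneg _) (hwb n) hgeo)
  have hvs : Summable v :=
    Summable.of_abs (Summable.of_nonneg_of_le (fun m => abs_nonneg _) hvb hgeo)
  rw [Metric.tendsto_atTop]
  intro ε hε
  obtain ⟨L, hKL, hL⟩ : ∃ L, K < L ∧ (1/2:ℝ)^L * (4*C) < ε/4 := by
    have h0 : Tendsto (fun L : ℕ => (1/2:ℝ)^L * (4*C)) atTop (𝓝 0) := by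
      simpa using (tendsto_pow_atTop_nhds_zero_of_lt_one (by norm_num : (0:ℝ) ≤ 1/2)
        (by norm_num : (1/2:ℝ) < 1)).mul_const (4*C)
    obtain ⟨L, h1, h2⟩ := ((h0.eventually_lt_const (show (0:ℝ) < ε/4 by positivity)).and
      (eventually_gt_atTop K)).exists
    exact ⟨L, h2, h1⟩
  set δ : ℝ := ε/(4*(L+1)) with hδdef
  have hδ : 0 < δ := by positivity
  have hlowAll : ∀ᶠ n in atTop, ∀ m ∈ Finset.range L, v m - δ < w n m :=
    eventually_all_finset _ |>.2 fun m _ => hlow m δ hδ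
  have hlowK : ∀ᶠ n in atTop, v K - ε < w n K := hlow K ε hε
  have hnear : ∀ᶠ n in atTop, |∑' m, w n m - ∑' m, v m| < ε/4 := by
    obtain ⟨N₀, hN₀⟩ := Metric.tendsto_atTop.1 hsum (ε/4) (by positivity)
    exact eventually_atTop.2 ⟨N₀, fun n hn => by simpa [Real.dist_eq] using hN₀ n hn⟩
  refine eventually_atTop.1 ?_
  filter_upwards [hlowAll, hlowK, hnear] with n h1 h2 h3
  rw [Real.dist_eq, abs_lt]
  refine ⟨by linarith, ?_⟩
  set u : ℕ → ℝ := fun m => w n m - v m with hu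
  have hu_abs : ∀ m, |u m| ≤ (1/2:ℝ)^m * (2*C) := by
    intro m
    have h4 := hwb n m
    have h5 := hvb m
    calc |u m| ≤ |w n m| + |v m| := abs_sub _ _
      _ ≤ (1/2:ℝ)^m * (2*C) := by linarith
  have hus : Summable u := (hws n).sub hvs
  have htsum : ∑' m, u m = ∑' m, w n m - ∑' m, v m := Summable.tsum_sub (hws n) hvs
  have hsplit : ∑ m ∈ Finset.range L, u m + ∑' k, u (k + L) = ∑' m, u m :=
    Summable.sum_add_tsum_nat_add L hus
  have htails : Summable (fun k => u (k + L)) := (summable_nat_add_iff L).2 hus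
  have hgeo2 : Summable (fun k : ℕ => (1/2:ℝ)^(k+L) * (2*C)) := by
    have := (summable_nat_add_iff (f := fun m : ℕ => (1/2:ℝ)^m * (2*C)) L).2
      ((summable_geometric_of_lt_one (by norm_num) (by norm_num)).mul_right (2*C))
    simpa using this
  have htailval : ∑' k : ℕ, (1/2:ℝ)^(k+L) * (2*C) = (1/2:ℝ)^L * (4*C) := by
    have heq : ∀ k : ℕ, (1/2:ℝ)^(k+L)*(2*C) = (1/2:ℝ)^k * ((1/2:ℝ)^L*(2*C)) := fun k => by
      rw [pow_add]; ring
    rw [tsum_congr heq, tsum_mul_right, tsum_geometric_of_lt_one (by norm_num) (by norm_num)]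
    norm_num
    ring
  have htail_lb : -((1/2:ℝ)^L*(4*C)) ≤ ∑' k, u (k + L) := by
    have hle : ∀ k : ℕ, -((1/2:ℝ)^(k+L) * (2*C)) ≤ u (k + L) := fun k =>
      (abs_le.1 (hu_abs (k+L))).1
    have := Summable.tsum_le_tsum hle hgeo2.neg htails
    rw [tsum_neg, htailval] at this
    linarith
  have hK : K ∈ Finset.range L := Finset.mem_range.2 hKL
  have herase : u K + ∑ m ∈ (Finset.range L).erase K, u m = ∑ m ∈ Finset.range L, u m :=
    Finset.add_sum_erase _ _ hK
  have herase_lb : -((L:ℝ) * δ) ≤ ∑ m ∈ (Finset.range L).erase K, u m := by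
    have hstep : ∀ m ∈ (Finset.range L).erase K, -δ ≤ u m := by
      intro m hm
      have hm' := Finset.mem_of_mem_erase hm
      have := h1 m hm'
      simp only [hu]
      linarith
    calc -((L:ℝ) * δ) ≤ ∑ m ∈ (Finset.range L).erase K, (-δ) := by
          rw [Finset.sum_const, nsmul_eq_mul]
          have hcard : (((Finset.range L).erase K).card : ℝ) ≤ (L : ℝ) := by
            have : ((Finset.range L).erase K).card ≤ L := by
              refine le_trans (Finset.card_erase_le) ?_
              simp
            exact_mod_cast this
          nlinarith [hδ.le]
      _ ≤ ∑ m ∈ (Finset.range L).erase K, u m := Finset.sum_le_sum hstep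
  have hLδ : (L:ℝ) * δ ≤ ε/4 := by
    rw [hδdef, mul_div_assoc', div_le_div_iff₀ (by positivity) (by norm_num)]
    nlinarith [hε.le, (Nat.cast_nonneg L : (0:ℝ) ≤ L)]
  have habs : ∑' m, u m < ε/4 := by
    rw [htsum]; exact lt_of_abs_lt h3
  have hfin : u K < ε := by
    have : u K = ∑' m, u m - (∑' k, u (k + L)) - ∑ m ∈ (Finset.range L).erase K, u m := by
      linarith [hsplit, herase]
    rw [this]
    linarith
  simpa [hu] using hfin

/-- Proposition 1.2: a selection principle for suprema of lower semicontinuous families. -/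
theorem statement0 {X : Type*} [TopologicalSpace X] {I : Type*} [Nonempty I]
    [TopologicalSpace I]
    (φ ψ : I → X → ℝ)
    (hbdd : ∃ M : ℝ, ∀ (i : I) (x : X), |φ i x| ≤ M ∧ |ψ i x| ≤ M)
    (hφ : ∀ i, LowerSemicontinuous (φ i)) (hψ : ∀ i, LowerSemicontinuous (ψ i))
    (Φ : X → ℝ) (hΦ : ∀ x, Φ x = ⨆ i, φ i x)
    (θm : ℕ → X → ℝ) (hθm : ∀ m x, θm m x = ⨆ i, (φ i x + (1 / 2 : ℝ) ^ m * ψ i x))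
    (θ : X → ℝ) (hθ : ∀ x, θ x = ∑' m : ℕ, (1 / 2 : ℝ) ^ (m + 1) * θm (m + 1) x)
    (f : X) (fs : ℕ → X) (hconv : Tendsto fs atTop (𝓝 f))
    (hθconv : Tendsto (fun n => θ (fs n)) atTop (𝓝 (θ f))) :
    ∃ is : ℕ → I,
      Tendsto (fun n => φ (is n) f) atTop (𝓝 (Φ f)) ∧
      Tendsto (fun n => φ (is n) (fs n)) atTop (𝓝 (Φ f)) ∧
      Tendsto (fun n => Φ (fs n)) atTop (𝓝 (Φ f)) ∧
      Tendsto (fun n => ψ (is n) (fs n) - ψ (is n) f) atTop (𝓝 0) ∧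
      (SeqCompactSpace I → ∃ i₀ : I, Tendsto is atTop (𝓝 i₀)) := by
  classical
  obtain ⟨M, hM⟩ := hbdd
  have hM0 : 0 ≤ M := le_trans (abs_nonneg _) (hM (Classical.arbitrary I) f).1
  have hc_pos : ∀ m : ℕ, (0:ℝ) < (1/2:ℝ)^m := fun m => pow_pos (by norm_num) m
  have hc_le1 : ∀ m : ℕ, (1/2:ℝ)^m ≤ 1 := fun m => pow_le_one₀ (by norm_num) (by norm_num)
  -- elementary bounds
  have hφ_le : ∀ i x, φ i x ≤ M := fun i x => (abs_le.1 (hM i x).1).2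
  have hφ_ge : ∀ i x, -M ≤ φ i x := fun i x => (abs_le.1 (hM i x).1).1
  have hψ_le : ∀ i x, ψ i x ≤ M := fun i x => (abs_le.1 (hM i x).2).2
  have hψ_ge : ∀ i x, -M ≤ ψ i x := fun i x => (abs_le.1 (hM i x).2).1
  have hcomb_le : ∀ (m : ℕ) x i, φ i x + (1/2:ℝ)^m * ψ i x ≤ 2*M := by
    intro m x i
    have h2 : (1/2:ℝ)^m * ψ i x ≤ (1/2:ℝ)^m * M :=
      mul_le_mul_of_nonneg_left (hψ_le i x) (hc_pos m).le
    nlinarith [hφ_le i x, hc_le1 m, (hc_pos m).le]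
  have hcomb_ge : ∀ (m : ℕ) x i, -(2*M) ≤ φ i x + (1/2:ℝ)^m * ψ i x := by
    intro m x i
    have h2 : (1/2:ℝ)^m * (-M) ≤ (1/2:ℝ)^m * ψ i x :=
      mul_le_mul_of_nonneg_left (hψ_ge i x) (hc_pos m).le
    nlinarith [hφ_ge i x, hc_le1 m, (hc_pos m).le]
  have hBdd : ∀ (m : ℕ) x, BddAbove (Set.range fun i => φ i x + (1/2:ℝ)^m * ψ i x) :=
    fun m x => ⟨2*M, by rintro y ⟨i, rfl⟩; exact hcomb_le m x i⟩
  have hBddφ : ∀ x, BddAbove (Set.range fun i => φ i x) :=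
    fun x => ⟨M, by rintro y ⟨i, rfl⟩; exact hφ_le i x⟩
  have hub : ∀ (m : ℕ) x i, φ i x + (1/2:ℝ)^m * ψ i x ≤ θm m x := by
    intro m x i; rw [hθm]; exact le_ciSup (hBdd m x) i
  have hΦub : ∀ x i, φ i x ≤ Φ x := by
    intro x i; rw [hΦ]; exact le_ciSup (hBddφ x) i
  have hθm_le : ∀ (m : ℕ) x, θm m x ≤ Φ x + (1/2:ℝ)^m * M := by
    intro m x; rw [hθm]
    refine ciSup_le fun i => ?_
    have h1 := hΦub x i
    have h2 : (1/2:ℝ)^m * ψ i x ≤ (1/2:ℝ)^m * M :=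
      mul_le_mul_of_nonneg_left (hψ_le i x) (hc_pos m).le
    linarith
  have hΦ_le_θ : ∀ (m : ℕ) x, Φ x ≤ θm m x + (1/2:ℝ)^m * M := by
    intro m x; rw [hΦ]
    refine ciSup_le fun i => ?_
    have h2 : (1/2:ℝ)^m * (-M) ≤ (1/2:ℝ)^m * ψ i x :=
      mul_le_mul_of_nonneg_left (hψ_ge i x) (hc_pos m).le
    have h3 := hub m x i
    nlinarith
  have hΦabs : ∀ x, |Φ x| ≤ M := by
    intro x
    rw [abs_le]
    constructor
    · exact le_trans (hφ_ge (Classical.arbitrary I) x) (hΦub x _)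
    · rw [hΦ]; exact ciSup_le fun i => hφ_le i x
  have hθmabs : ∀ (m : ℕ) x, |θm m x| ≤ 2*M := by
    intro m x
    rw [abs_le]
    constructor
    · exact le_trans (hcomb_ge m x (Classical.arbitrary I)) (hub m x _)
    · have h1 := hθm_le m x
      have h2 := (abs_le.1 (hΦabs x)).2
      nlinarith [hc_le1 m, (hc_pos m).le]
  -- lower semicontinuity of θm m
  have hθmLSC : ∀ m : ℕ, LowerSemicontinuous (θm m) := by
    intro m x y hy
    rw [hθm] at hy
    obtain ⟨i, hi⟩ := exists_lt_of_lt_ciSup hy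
    have ht0 : 0 < φ i x + (1/2:ℝ)^m * ψ i x - y := by linarith
    set t := φ i x + (1/2:ℝ)^m * ψ i x - y with htdef
    have h1 := hφ i x (φ i x - t/2) (by linarith)
    have h2 := hψ i x (ψ i x - t/(2 * (1/2:ℝ)^m)) (by
      have : 0 < t/(2 * (1/2:ℝ)^m) := by positivity
      linarith)
    filter_upwards [h1, h2] with x' hx1 hx2
    have hkey : y < φ i x' + (1/2:ℝ)^m * ψ i x' := by
      have h3 : (1/2:ℝ)^m * (ψ i x - t/(2 * (1/2:ℝ)^m)) < (1/2:ℝ)^m * ψ i x' :=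
        mul_lt_mul_of_pos_left hx2 (hc_pos m)
      have h4 : (1/2:ℝ)^m * (t / (2 * (1/2:ℝ)^m)) = t/2 := by
        field_simp
      rw [mul_sub, h4] at h3
      linarith
    exact lt_of_lt_of_le hkey (hub m x' i)
  -- lsc along the sequence
  have hev : ∀ (g : X → ℝ), LowerSemicontinuous g → ∀ ε : ℝ, 0 < ε →
      ∀ᶠ n in atTop, g f - ε < g (fs n) :=
    fun g hg ε hε => hconv.eventually (hg f (g f - ε) (by linarith))
  -- coordinatewise convergence of θm
  have hθmconv : ∀ K : ℕ, Tendsto (fun n => θm (K+1) (fs n)) atTop (𝓝 (θm (K+1) f)) := by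
    intro K
    have hw : ∀ n m, |(1/2:ℝ)^(m+1) * θm (m+1) (fs n)| ≤ (1/2:ℝ)^m * M := by
      intro n m
      rw [abs_mul, abs_pow]
      have h1 := hθmabs (m+1) (fs n)
      have h2 : |(1/2:ℝ)| = (1/2:ℝ) := by norm_num
      rw [h2, pow_succ]
      nlinarith [(hc_pos m).le, abs_nonneg (θm (m+1) (fs n))]
    have hv : ∀ m, |(1/2:ℝ)^(m+1) * θm (m+1) f| ≤ (1/2:ℝ)^m * M := by
      intro m
      rw [abs_mul, abs_pow]
      have h1 := hθmabs (m+1) f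
      have h2 : |(1/2:ℝ)| = (1/2:ℝ) := by norm_num
      rw [h2, pow_succ]
      nlinarith [(hc_pos m).le, abs_nonneg (θm (m+1) f)]
    have hlow : ∀ m : ℕ, ∀ ε : ℝ, 0 < ε → ∀ᶠ n in atTop,
        (1/2:ℝ)^(m+1) * θm (m+1) f - ε < (1/2:ℝ)^(m+1) * θm (m+1) (fs n) := by
      intro m ε hε
      have hc := hc_pos (m+1)
      filter_upwards [hev _ (hθmLSC (m+1)) (ε / (1/2:ℝ)^(m+1)) (by positivity)] with n hn
      have := mul_lt_mul_of_pos_left hn hc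
      rw [mul_sub, mul_div_cancel₀ _ (ne_of_gt hc)] at this
      linarith
    have hsum' : Tendsto (fun n => ∑' m, (1/2:ℝ)^(m+1) * θm (m+1) (fs n)) atTop
        (𝓝 (∑' m, (1/2:ℝ)^(m+1) * θm (m+1) f)) := by
      simp only [← hθ]
      exact hθconv
    have haux := aux_coord (fun n m => (1/2:ℝ)^(m+1) * θm (m+1) (fs n))
      (fun m => (1/2:ℝ)^(m+1) * θm (m+1) f) M hw hv hlow hsum' K
    have h2 := haux.const_mul (((1/2:ℝ)^(K+1))⁻¹)
    have hc := ne_of_gt (hc_pos (K+1))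
    simp only [inv_mul_cancel_left₀ hc] at h2
    exact h2
  -- convergence of Φ along the sequence
  have hΦconv : Tendsto (fun n => Φ (fs n)) atTop (𝓝 (Φ f)) := by
    rw [Metric.tendsto_atTop]
    intro ε hε
    obtain ⟨K, hK⟩ : ∃ K : ℕ, (1/2:ℝ)^(K+1) * M < ε/4 := by
      have h0 : Tendsto (fun K : ℕ => (1/2:ℝ)^(K+1) * M) atTop (𝓝 0) := by
        have := (tendsto_pow_atTop_nhds_zero_of_lt_one (by norm_num : (0:ℝ) ≤ 1/2)
          (by norm_num : (1/2:ℝ) < 1)).mul_const M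
        simp only [zero_mul] at this
        exact this.comp (tendsto_add_atTop_nat 1)
      exact (h0.eventually_lt_const (show (0:ℝ) < ε/4 by positivity)).exists
    refine eventually_atTop.1 ?_
    have hcv := Metric.tendsto_atTop.1 (hθmconv K) (ε/4) (by positivity)
    obtain ⟨N₀, hN₀⟩ := hcv
    refine eventually_atTop.2 ⟨N₀, fun n hn => ?_⟩
    have h1 := hN₀ n hn
    rw [Real.dist_eq] at h1 ⊢
    have h2 := hθm_le (K+1) (fs n)
    have h3 := hΦ_le_θ (K+1) (fs n)
    have h4 := hθm_le (K+1) f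
    have h5 := hΦ_le_θ (K+1) f
    rw [abs_lt] at h1 ⊢
    exact ⟨by nlinarith [hK, h1.1], by nlinarith [hK, h1.2]⟩
  -- the "limit ψ-value" s
  set σ : ℕ → ℝ := fun m => (θm m f - Φ f) / (1/2:ℝ)^m with hσdef
  have hσ_eq : ∀ m : ℕ, θm m f - Φ f = (1/2:ℝ)^m * σ m := by
    intro m
    rw [hσdef]
    field_simp
  have hσ_lb : ∀ m : ℕ, -M ≤ σ m := by
    intro m
    rw [hσdef, le_div_iff₀ (hc_pos m)]
    have := hΦ_le_θ m f
    nlinarith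
  have hσ_ub : ∀ m : ℕ, σ m ≤ M := by
    intro m
    rw [hσdef, div_le_iff₀ (hc_pos m)]
    have := hθm_le m f
    nlinarith
  set s : ℝ := ⨅ m : ℕ, σ (m+1) with hsdef
  have hsBdd : BddBelow (Set.range fun m : ℕ => σ (m+1)) :=
    ⟨-M, by rintro y ⟨m, rfl⟩; exact hσ_lb _⟩
  have hs_le : ∀ m : ℕ, s ≤ σ (m+1) := fun m => ciInf_le hsBdd m
  have hs_approx : ∀ ε : ℝ, 0 < ε → ∃ k : ℕ, σ (k+1) < s + ε := by
    intro ε hε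
    exact exists_lt_of_ciInf_lt (show s < s + ε by linarith)
  -- near-optimizers at f
  have hjex : ∀ m : ℕ, ∃ i, θm m f - (1/2:ℝ)^m * (1/2:ℝ)^m < φ i f + (1/2:ℝ)^m * ψ i f := by
    intro m
    have ha : θm m f - (1/2:ℝ)^m * (1/2:ℝ)^m < ⨆ i, (φ i f + (1/2:ℝ)^m * ψ i f) := by
      rw [← hθm]
      nlinarith [hc_pos m]
    exact exists_lt_of_lt_ciSup ha
  choose j hj using hjex
  have hjφ_ub : ∀ m, φ (j m) f ≤ Φ f := fun m => hΦub f _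
  have hjφ_lb : ∀ m : ℕ, Φ f - (1/2:ℝ)^m * (2*M+1) ≤ φ (j m) f := by
    intro m
    have h1 := hj m
    have h2 : (1/2:ℝ)^m * ψ (j m) f ≤ (1/2:ℝ)^m * M :=
      mul_le_mul_of_nonneg_left (hψ_le _ f) (hc_pos m).le
    have h3 := hΦ_le_θ m f
    nlinarith [hc_pos m, hc_le1 m]
  have hjψ_lb : ∀ m : ℕ, σ m - (1/2:ℝ)^m ≤ ψ (j m) f := by
    intro m
    have h1 := hj m
    have h2 := hjφ_ub m
    have h3 := hσ_eq m
    have h4 : (1/2:ℝ)^m * (σ m - (1/2:ℝ)^m) < (1/2:ℝ)^m * ψ (j m) f := by nlinarith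
    exact (mul_lt_mul_iff_right₀ (hc_pos m)).1 h4 |>.le
  -- eventual lower semicontinuity bounds for each j m
  have hEev : ∀ m : ℕ, ∀ᶠ n in atTop,
      (φ (j m) f - (1/2:ℝ)^m < φ (j m) (fs n) ∧ ψ (j m) f - (1/2:ℝ)^m < ψ (j m) (fs n)) :=
    fun m => (hev _ (hφ (j m)) _ (hc_pos m)).and (hev _ (hψ (j m)) _ (hc_pos m))
  choose N hN using fun m => eventually_atTop.1 (hEev m)
  -- main construction, parametrized by a strictly monotone reindexing κ
  have main : ∀ κ : ℕ → ℕ, StrictMono κ → ∃ g : ℕ → ℕ, Tendsto g atTop atTop ∧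
      Tendsto (fun n => φ (j (κ (g n))) f) atTop (𝓝 (Φ f)) ∧
      Tendsto (fun n => φ (j (κ (g n))) (fs n)) atTop (𝓝 (Φ f)) ∧
      Tendsto (fun n => ψ (j (κ (g n))) (fs n) - ψ (j (κ (g n))) f) atTop (𝓝 0) := by
    intro κ hκ
    set g : ℕ → ℕ := fun n => Nat.findGreatest (fun l => N (κ l) ≤ n) n with hgdef
    have hg_top : Tendsto g atTop atTop := by
      rw [tendsto_atTop_atTop]
      intro l
      refine ⟨max l (N (κ l)), fun n hn => ?_⟩
      exact Nat.le_findGreatest (le_trans (le_max_left _ _) hn)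
        (le_trans (le_max_right _ _) hn)
    have hPg : ∀ n, N (κ 0) ≤ n → N (κ (g n)) ≤ n := fun n hn =>
      Nat.findGreatest_spec (P := fun l => N (κ l) ≤ n) (m := 0) (Nat.zero_le n) hn
    set mn : ℕ → ℕ := fun n => κ (g n) with hmndef
    have hmn_top : Tendsto mn atTop atTop :=
      tendsto_atTop_mono (fun n => hκ.le_apply) hg_top
    have hhalf : Tendsto (fun n => (1/2:ℝ)^(mn n)) atTop (𝓝 0) :=
      (tendsto_pow_atTop_nhds_zero_of_lt_one (by norm_num : (0:ℝ) ≤ 1/2)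
        (by norm_num : (1/2:ℝ) < 1)).comp hmn_top
    -- eventual facts about n
    have hNev : ∀ᶠ n in atTop, N (mn n) ≤ n := by
      filter_upwards [eventually_ge_atTop (N (κ 0))] with n hn
      exact hPg n hn
    have hmn1 : ∀ᶠ n in atTop, 1 ≤ mn n := by
      filter_upwards [hg_top.eventually_ge_atTop 1] with n hn
      exact le_trans hn hκ.le_apply
    -- T1
    have T1 : Tendsto (fun n => φ (j (mn n)) f) atTop (𝓝 (Φ f)) := by
      have hlo : Tendsto (fun n => Φ f - (1/2:ℝ)^(mn n) * (2*M+1)) atTop (𝓝 (Φ f)) := by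
        have := tendsto_const_nhds (x := Φ f) (f := atTop (α := ℕ)) |>.sub
          (hhalf.mul_const (2*M+1))
        simpa using this
      exact tendsto_of_tendsto_of_tendsto_of_le_of_le hlo tendsto_const_nhds
        (fun n => hjφ_lb (mn n)) (fun n => hjφ_ub (mn n))
    -- T2
    have T2 : Tendsto (fun n => φ (j (mn n)) (fs n)) atTop (𝓝 (Φ f)) := by
      have hlo : Tendsto (fun n => φ (j (mn n)) f - (1/2:ℝ)^(mn n)) atTop (𝓝 (Φ f)) := by
        have := T1.sub hhalf
        simpa using this
      refine tendsto_of_tendsto_of_tendsto_of_le_of_le' hlo hΦconv ?_ ?_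
      · filter_upwards [hNev] with n hn
        exact (hN (mn n) n hn).1.le
      · exact Eventually.of_forall fun n => hΦub (fs n) _
    -- T4
    have T4 : Tendsto (fun n => ψ (j (mn n)) (fs n) - ψ (j (mn n)) f) atTop (𝓝 0) := by
      rw [Metric.tendsto_atTop]
      intro ε hε
      obtain ⟨k, hk⟩ := hs_approx (ε/4) (by positivity)
      have E1 : ∀ᶠ n in atTop, (1/2:ℝ)^(mn n) < ε/4 :=
        hhalf.eventually_lt_const (by positivity)
      have E2 : ∀ᶠ n in atTop, Φ f - (1/2:ℝ)^(k+1) * (ε/4) < φ (j (mn n)) (fs n) :=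
        T2.eventually_const_lt (by nlinarith [hc_pos (k+1)])
      have E3 : ∀ᶠ n in atTop,
          θm (k+1) (fs n) < θm (k+1) f + (1/2:ℝ)^(k+1) * (ε/4) :=
        (hθmconv k).eventually_lt_const (by nlinarith [hc_pos (k+1)])
      refine eventually_atTop.1 ?_
      filter_upwards [E1, E2, E3, hNev, hmn1] with n h1 h2 h3 h4 h5
      rw [Real.dist_eq, sub_zero, abs_lt]
      -- lower bound on the difference
      have hlow : ψ (j (mn n)) f - (1/2:ℝ)^(mn n) < ψ (j (mn n)) (fs n) := (hN (mn n) n h4).2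
      -- upper bound on ψ (j (mn n)) (fs n)
      have hup : ψ (j (mn n)) (fs n) < s + 3*(ε/4) := by
        have hu1 := hub (k+1) (fs n) (j (mn n))
        have hu2 := hσ_eq (k+1)
        have hcp := hc_pos (k+1)
        -- (1/2)^(k+1) * ψ ≤ θm (k+1) (fs n) - φ (j (mn n)) (fs n)
        --                < (1/2)^(k+1) * (σ (k+1) + ε/2)
        have : (1/2:ℝ)^(k+1) * ψ (j (mn n)) (fs n) <
            (1/2:ℝ)^(k+1) * (σ (k+1) + ε/2) := by nlinarith
        have := (mul_lt_mul_iff_right₀ hcp).1 this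
        nlinarith
      -- lower bound on ψ (j (mn n)) f via σ
      have hBlb : s - (1/2:ℝ)^(mn n) ≤ ψ (j (mn n)) f := by
        obtain ⟨m', hm'⟩ : ∃ m', mn n = m' + 1 :=
          ⟨mn n - 1, (Nat.succ_pred_eq_of_pos h5).symm⟩
        have := hjψ_lb (mn n)
        have hs2 : s ≤ σ (mn n) := by rw [hm']; exact hs_le m'
        linarith
      constructor
      · linarith
      · linarith
    exact ⟨g, hg_top, T1, T2, T4⟩
  -- assemble
  by_cases hSC : SeqCompactSpace I
  · obtain ⟨i₀, κ, hκ, hκconv⟩ := SeqCompactSpace.tendsto_subseq j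
    obtain ⟨g, hg_top, T1, T2, T4⟩ := main κ hκ
    refine ⟨fun n => j (κ (g n)), T1, T2, hΦconv, T4, fun _ => ⟨i₀, ?_⟩⟩
    exact hκconv.comp hg_top
  · obtain ⟨g, hg_top, T1, T2, T4⟩ := main id strictMono_id
    exact ⟨fun n => j (g n), T1, T2, hΦconv, T4, fun h => absurd h hSC⟩
end

section
/- Let Υ be a tree and let ‖·‖ be a norm on C₀(Υ) equivalent to the supremum norm which has the Kadec property. Then the associated function μ has no bad points. -/
open Filter Topology Set

noncomputable section

/-- `n` is a norm on `X` equivalent to the given norm. -/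
def IsEquivNorm {X : Type*} [SeminormedAddCommGroup X] [Module ℝ X] (n : X → ℝ) : Prop :=
  (∀ (a : ℝ) (x : X), n (a • x) = |a| * n x) ∧
  (∀ x y : X, n (x + y) ≤ n x + n y) ∧
  ∃ c C : ℝ, 0 < c ∧ ∀ x : X, c * ‖x‖ ≤ n x ∧ n x ≤ C * ‖x‖

/-- Local uniform convexity of a norm-like function `n`. -/
def IsLUR {X : Type*} [AddCommGroup X] (n : X → ℝ) : Prop :=
  ∀ (x : X) (xs : ℕ → X),
    Tendsto (fun k => n (xs k)) atTop (𝓝 (n x)) →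
    Tendsto (fun k => n (x + xs k)) atTop (𝓝 (2 * n x)) →
    Tendsto (fun k => n (x - xs k)) atTop (𝓝 0)

/-- Midpoint local uniform convexity. -/
def IsMLUR {X : Type*} [AddCommGroup X] (n : X → ℝ) : Prop :=
  ∀ (x : X) (hs : ℕ → X),
    Tendsto (fun k => n (x + hs k)) atTop (𝓝 (n x)) →
    Tendsto (fun k => n (x - hs k)) atTop (𝓝 (n x)) →
    Tendsto (fun k => n (hs k)) atTop (𝓝 0)

/-- Strict convexity of a norm-like function `n`. -/
def IsStrictConvexNorm {X : Type*} [AddCommGroup X] [Module ℝ X] (n : X → ℝ) : Prop :=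
  ∀ x y : X, n x = n y → n ((2⁻¹ : ℝ) • (x + y)) = n x → x = y

/-- The dual norm of `n` on the continuous dual of `X`. -/
def dualNorm {X : Type*} [SeminormedAddCommGroup X] [NormedSpace ℝ X] (n : X → ℝ)
    (ξ : X →L[ℝ] ℝ) : ℝ :=
  sSup ((fun x => ξ x) '' {x : X | n x ≤ 1})

/-- Weak local uniform convexity. -/
def IsWLUR {X : Type*} [SeminormedAddCommGroup X] [NormedSpace ℝ X] (n : X → ℝ) : Prop :=
  ∀ (x : X) (xs : ℕ → X),
    Tendsto (fun k => n (xs k)) atTop (𝓝 (n x)) →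
    Tendsto (fun k => n (x + xs k)) atTop (𝓝 (2 * n x)) →
    ∀ ξ : X →L[ℝ] ℝ, Tendsto (fun k => ξ (xs k)) atTop (𝓝 (ξ x))

/-- The weak topology of a normed space: the coarsest topology making all continuous
linear functionals continuous. -/
def weakTopology (X : Type*) [SeminormedAddCommGroup X] [NormedSpace ℝ X] :
    TopologicalSpace X :=
  ⨅ ξ : X →L[ℝ] ℝ, TopologicalSpace.induced (fun x => ξ x) inferInstance

/-- The Kadec property: weak and norm topologies coincide on the unit sphere of `n`. -/
def IsKadec {X : Type*} [SeminormedAddCommGroup X] [NormedSpace ℝ X] (n : X → ℝ) : Prop :=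
  TopologicalSpace.induced (Subtype.val : {x : X // n x = 1} → X) (weakTopology X) =
    TopologicalSpace.induced (Subtype.val : {x : X // n x = 1} → X) inferInstance

/-- A tree: every set of strict predecessors is well-ordered. -/
def IsTree (Υ : Type*) [PartialOrder Υ] : Prop :=
  ∀ t : Υ, IsWellOrder {s : Υ // s < t} (· < ·)

/-- A Hausdorff tree: points whose predecessor set is nonempty with no greatest element
are determined by their sets of strict predecessors. -/
def IsHausdorffTree (Υ : Type*) [PartialOrder Υ] : Prop :=
  ∀ t t' : Υ, (Set.Iio t).Nonempty → (∀ s, s < t → ∃ s', s < s' ∧ s' < t) →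
    Set.Iio t = Set.Iio t' → t = t'

/-- The locally compact topology of a tree: the coarsest topology in which every
interval `(0, t]` is both open and closed. -/
def treeTopology (Υ : Type*) [PartialOrder Υ] : TopologicalSpace Υ :=
  TopologicalSpace.generateFrom
    ({S | ∃ t : Υ, S = Set.Iic t} ∪ {S | ∃ t : Υ, S = (Set.Iic t)ᶜ})

/-- The tree `Υ` carrying its locally compact topology. -/
def TreeSpace (Υ : Type*) [PartialOrder Υ] : Type _ := Υ

instance (Υ : Type*) [PartialOrder Υ] : TopologicalSpace (TreeSpace Υ) := treeTopology Υ

/-- `C₀(Υ)`: continuous real functions on the tree vanishing at infinity, with sup norm. -/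
abbrev C0Tree (Υ : Type*) [PartialOrder Υ] := ZeroAtInftyContinuousMap (TreeSpace Υ) ℝ

/-- Identification of the tree and its topological incarnation. -/
def toTree {Υ : Type*} [PartialOrder Υ] (t : Υ) : TreeSpace Υ := t

/-- `t` is a good point for `ρ`: off a finite set of immediate successors of `t`,
`ρ` is bounded away above `ρ t`.  A bad point is a point that is not good. -/
def GoodPoint {Υ : Type*} [PartialOrder Υ] (ρ : Υ → ℝ) (t : Υ) : Prop :=
  ∃ (F : Finset Υ) (c : ℝ), ρ t < c ∧ ∀ u : Υ, t ⋖ u → u ∉ F → c ≤ ρ u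

/-- A subset `Γ` of a tree is ever-branching if no `t ∈ Γ` has totally ordered
set of successors within `Γ`. -/
def EverBranching {Υ : Type*} [PartialOrder Υ] (Γ : Set Υ) : Prop :=
  ∀ t ∈ Γ, ∃ u ∈ Γ, ∃ v ∈ Γ, t ≤ u ∧ t ≤ v ∧ ¬ u ≤ v ∧ ¬ v ≤ u

/-- `ρ` is constant on no (nonempty) ever-branching subset. -/
def ConstOnNoEverBranching {Υ : Type*} [PartialOrder Υ] (ρ : Υ → ℝ) : Prop :=
  ∀ Γ : Set Υ, Γ.Nonempty → EverBranching Γ → ¬ ∃ c : ℝ, ∀ t ∈ Γ, ρ t = c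

/-- The function `μ` associated with an equivalent norm `n` on `C₀(Υ)`:
`μ t` is the infimum of `n f` over all `f` of the form `𝟙_(0,t] + f'` with
`f'` supported in `(t, ∞)`. -/
def muFn {Υ : Type*} [PartialOrder Υ] (n : C0Tree Υ → ℝ) (t : Υ) : ℝ :=
  sInf (n '' {f : C0Tree Υ |
    (∀ s : Υ, s ≤ t → f (toTree s) = 1) ∧
    ∀ s : Υ, ¬ s ≤ t → ¬ t < s → f (toTree s) = 0})

/-- A copy of `α` carrying the discrete topology. -/
def DiscreteOf (α : Type*) : Type _ := α

instance (α : Type*) : TopologicalSpace (DiscreteOf α) := ⊥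
instance (α : Type*) : DiscreteTopology (DiscreteOf α) := ⟨rfl⟩

/-- The space `c₀(α)` with its sup norm. -/
abbrev c0 (α : Type*) := ZeroAtInftyContinuousMap (DiscreteOf α) ℝ

/-- Identification of `α` with its discrete copy. -/
def toDisc {α : Type*} (a : α) : DiscreteOf α := a

end

/-!
Suppose `t` is bad for `μ` and let `e = 𝟙_(0,t]`. Badness yields distinct immediate successors
`u k` of `t` and competitors `f k` for `μ (u k)` with `n (f k) → μ t`; each `f k` is also a
competitor for `μ t`. The differences `f k - e` are bounded and live on the pairwise disjoint cones
`[u k, ∞)`, hence are weakly null, so `f k → e` weakly. Weak lower semicontinuity of `n`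
(Hahn–Banach) and `μ t ≤ n e` give `n e = μ t = lim n (f k)`, and the Kadec property turns weak
into norm convergence. But `(f k - e) (u k) = 1`, so `‖f k - e‖ ≥ 1` for all `k`.
-/

open Function

section Tree

variable {Υ : Type*} [PartialOrder Υ]

theorem IsTree.le_total_of_le (htree : IsTree Υ) {x y s : Υ} (hx : x ≤ s) (hy : y ≤ s) :
    x ≤ y ∨ y ≤ x := by
  rcases hx.eq_or_lt with rfl | hxs
  · exact Or.inr hy
  rcases hy.eq_or_lt with rfl | hys
  · exact Or.inl hx
  have := htree s
  rcases trichotomous_of (· < ·) (⟨x, hxs⟩ : {s' // s' < s}) ⟨y, hys⟩ with h | h | h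
  · exact Or.inl (le_of_lt h)
  · exact Or.inl (congrArg Subtype.val h).le
  · exact Or.inr (le_of_lt h)

theorem IsTree.wellFounded_lt (htree : IsTree Υ) : WellFounded ((· < ·) : Υ → Υ → Prop) := by
  refine ⟨fun x => ⟨x, fun y hy => ?_⟩⟩
  have hacc : ∀ z : {s // s < x}, Acc (· < ·) (z : Υ) := fun z =>
    (htree x).wf.induction (C := fun z => Acc (· < ·) (z : Υ)) z fun z ih =>
      Acc.intro (z : Υ) fun w hw => ih ⟨w, hw.trans z.2⟩ hw
  exact hacc ⟨y, hy⟩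

theorem IsTree.exists_isLeast (htree : IsTree Υ) {s : Υ} {D : Set Υ} (hD : D ⊆ Iic s)
    (hne : D.Nonempty) : ∃ d, IsLeast D d := by
  obtain ⟨d, hd, hmin⟩ := htree.wellFounded_lt.has_min D hne
  refine ⟨d, hd, fun y hy => ?_⟩
  rcases htree.le_total_of_le (hD hd) (hD hy) with h | h
  · exact h
  · exact h.eq_or_lt.elim (fun h => h.ge) fun h => (hmin y hy h).elim

theorem IsTree.exists_Iic_inter_Iic_eq_Iio (htree : IsTree Υ) {r s : Υ} (h : ¬ s ≤ r) :
    ∃ d ≤ s, Iic r ∩ Iic s = Iio d := by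
  obtain ⟨d, ⟨hds, hdr⟩, hmin⟩ :=
    htree.exists_isLeast (D := Iic s \ Iic r) sdiff_subset ⟨s, le_rfl, h⟩
  refine ⟨d, hds, Set.ext fun x => ⟨fun ⟨hxr, hxs⟩ => ?_, fun hxd => ?_⟩⟩
  · rcases htree.le_total_of_le hxs hds with hxd | hdx
    · exact hxd.lt_of_ne fun hxd => hdr (hxd ▸ hxr)
    · exact (hdr (hdx.trans hxr)).elim
  · have hxs : x ≤ s := hxd.le.trans hds
    by_contra hxr
    exact (hmin ⟨hxs, fun h' => hxr ⟨h', hxs⟩⟩).not_gt hxd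

/-- For incomparable `r`, `s` the intersection is both `Iio d` (`d ≤ s`) and `Iio e` (`e ≤ r`);
without a greatest element it has limit type, and the Hausdorff property would force `d = e`. -/
theorem IsHausdorffTree.exists_Iic_inter_Iic_eq_Iic (htree : IsTree Υ) (hH : IsHausdorffTree Υ)
    {r s : Υ} (hne : (Iic r ∩ Iic s).Nonempty) : ∃ m, Iic r ∩ Iic s = Iic m := by
  by_cases hsr : s ≤ r
  · exact ⟨s, inter_eq_right.2 (Iic_subset_Iic.2 hsr)⟩
  by_cases hrs : r ≤ s
  · exact ⟨r, inter_eq_left.2 (Iic_subset_Iic.2 hrs)⟩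
  obtain ⟨d, hds, hd⟩ := htree.exists_Iic_inter_Iic_eq_Iio hsr
  obtain ⟨e, her, he⟩ := htree.exists_Iic_inter_Iic_eq_Iio hrs
  rw [inter_comm, hd] at he
  by_contra hno
  push Not at hno
  have hlimit : ∀ x < d, ∃ y, x < y ∧ y < d := by
    intro x hxd
    obtain ⟨y, hyd, hyx⟩ : ∃ y < d, ¬ y ≤ x := by
      by_contra! hall
      exact hno x (hd.trans (Set.ext fun y => ⟨hall y, fun hyx => hyx.trans_lt hxd⟩))
    rcases htree.le_total_of_le hxd.le hyd.le with hxy | hyx'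
    · exact ⟨y, hxy.lt_of_ne (by rintro rfl; exact hyx le_rfl), hyd⟩
    · exact (hyx hyx').elim
  have hde : d = e := hH d e (hd ▸ hne) hlimit he
  have hdd : d ∈ Iio d := hd ▸ ⟨hde ▸ her, hds⟩
  exact lt_irrefl d hdd

theorem IsTree.disjoint_Ici_of_covBy (htree : IsTree Υ) {t u v : Υ} (hu : t ⋖ u) (hv : t ⋖ v)
    (huv : u ≠ v) : Disjoint (Ici u) (Ici v) := by
  refine Set.disjoint_left.2 fun s hus hvs => ?_
  rcases htree.le_total_of_le hus hvs with h | h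
  · exact hv.2 hu.1 (h.lt_of_ne huv)
  · exact hu.2 hv.1 (h.lt_of_ne huv.symm)

end Tree

section TreeSpace

variable {Υ : Type*} [PartialOrder Υ]

theorem isClopen_Iic_treeSpace (t : Υ) : IsClopen (X := TreeSpace Υ) (Iic t : Set Υ) :=
  ⟨isOpen_compl_iff.1 (TopologicalSpace.isOpen_generateFrom_of_mem (Or.inr ⟨t, rfl⟩)),
    TopologicalSpace.isOpen_generateFrom_of_mem (Or.inl ⟨t, rfl⟩)⟩

/-- Alexander's subbasis theorem, with a well-founded induction on `t`: a subbasic cover of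
`(0, t]` contains a set `U ∋ t`, and `(0, t] \ U` is empty or a strictly shorter segment. -/
theorem isCompact_Iic_treeSpace (htree : IsTree Υ) (hH : IsHausdorffTree Υ) (t : Υ) :
    IsCompact (X := TreeSpace Υ) (Iic t : Set Υ) := by
  let := treeTopology Υ
  show IsCompact (Iic t)
  refine isCompact_generateFrom rfl fun P hPS => ?_
  induction t using WellFounded.induction htree.wellFounded_lt with
  | h s ih =>
    intro hcov
    obtain ⟨U, hUP, hsU⟩ := hcov (le_refl s)
    rcases hPS hUP with ⟨r, rfl⟩ | ⟨r, rfl⟩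
    · exact ⟨{Iic r}, singleton_subset_iff.2 hUP, finite_singleton _,
        fun x hx => ⟨Iic r, rfl, le_trans hx hsU⟩⟩
    rcases (Iic r ∩ Iic s).eq_empty_or_nonempty with h0 | hne
    · refine ⟨{(Iic r)ᶜ}, singleton_subset_iff.2 hUP, finite_singleton _,
        fun x hx => ⟨(Iic r)ᶜ, rfl, fun hxr => ?_⟩⟩
      exact (h0.subset ⟨hxr, hx⟩ : x ∈ (∅ : Set Υ))
    obtain ⟨m, hm⟩ := hH.exists_Iic_inter_Iic_eq_Iic htree hne
    have hms : m < s := by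
      have hm' : m ∈ Iic r ∩ Iic s := hm ▸ le_refl m
      exact hm'.2.lt_of_ne fun h => hsU (h ▸ hm'.1)
    obtain ⟨Q, hQP, hQfin, hQcov⟩ := ih m hms ((Iic_subset_Iic.2 hms.le).trans hcov)
    refine ⟨insert (Iic r)ᶜ Q, insert_subset hUP hQP, hQfin.insert _, fun x hx => ?_⟩
    by_cases hxr : x ≤ r
    · exact sUnion_mono (subset_insert _ _) (hQcov (hm ▸ ⟨hxr, hx⟩ : x ∈ Iic m))
    · exact ⟨(Iic r)ᶜ, mem_insert _ _, hxr⟩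

theorem exists_C0Tree_indicator_Iic (htree : IsTree Υ) (hH : IsHausdorffTree Υ) (t : Υ) :
    ∃ e : C0Tree Υ, (∀ s ≤ t, e (toTree s) = 1) ∧ ∀ s, ¬ s ≤ t → e (toTree s) = 0 := by
  refine ⟨⟨⟨(Iic t : Set Υ).indicator 1,
    (isClopen_Iic_treeSpace t).continuous_indicator continuous_const⟩, ?_⟩,
    fun s hs => indicator_of_mem (mem_Iic.2 hs) _,
    fun s hs => indicator_of_notMem (show s ∉ Iic t from hs) _⟩
  exact (HasCompactSupport.intro' (α := TreeSpace Υ) (isCompact_Iic_treeSpace htree hH t)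
    (isClopen_Iic_treeSpace t).isClosed fun x hx => indicator_of_notMem hx _).is_zero_at_infty

end TreeSpace

section EquivNorm

variable {X : Type*} [NormedAddCommGroup X] [NormedSpace ℝ X] {n : X → ℝ}

theorem IsEquivNorm.nonneg (hn : IsEquivNorm n) (x : X) : 0 ≤ n x := by
  obtain ⟨-, -, c, C, hc, hbd⟩ := hn
  exact (mul_nonneg hc.le (norm_nonneg x)).trans (hbd x).1

theorem IsEquivNorm.pos (hn : IsEquivNorm n) {x : X} (hx : x ≠ 0) : 0 < n x := by
  obtain ⟨-, -, c, C, hc, hbd⟩ := hn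
  exact (mul_pos hc (norm_pos_iff.2 hx)).trans_le (hbd x).1

theorem IsEquivNorm.map_zero (hn : IsEquivNorm n) : n 0 = 0 := by
  simpa using hn.1 0 0

theorem IsEquivNorm.exists_norm_le_mul (hn : IsEquivNorm n) :
    ∃ C ≥ 0, ∀ x : X, ‖x‖ ≤ C * n x := by
  obtain ⟨-, -, c, C, hc, hbd⟩ := hn
  refine ⟨c⁻¹, inv_nonneg.2 hc.le, fun x => ?_⟩
  rw [inv_mul_eq_div, le_div_iff₀ hc, mul_comm]
  exact (hbd x).1

theorem IsEquivNorm.inv_smul_self (hn : IsEquivNorm n) {x : X} (hx : x ≠ 0) :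
    n ((n x)⁻¹ • x) = 1 := by
  rw [hn.1, abs_of_pos (inv_pos.2 (hn.pos hx)), inv_mul_cancel₀ (hn.pos hx).ne']

theorem IsEquivNorm.exists_clm_eq_le (hn : IsEquivNorm n) (x : X) :
    ∃ φ : X →L[ℝ] ℝ, φ x = n x ∧ ∀ y, φ y ≤ n y := by
  obtain ⟨hsmul, hadd, c, C, hc, hbd⟩ := id hn
  have hker : ∀ a : ℝ, a • x = 0 → a • n x = 0 := fun a ha => by
    have h := hsmul a x
    rw [ha, hn.map_zero, eq_comm, mul_eq_zero, abs_eq_zero] at h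
    rcases h with h | h <;> simp [h]
  obtain ⟨g, hgx, hg⟩ := exists_extension_of_le_sublinear
    (LinearPMap.mkSpanSingleton' x (n x) hker) n
    (fun a ha y => by rw [hsmul, abs_of_pos ha]) hadd fun ⟨y, hy⟩ => by
      obtain ⟨a, rfl⟩ := Submodule.mem_span_singleton.1 hy
      rw [LinearPMap.mkSpanSingleton'_apply, hsmul, smul_eq_mul]
      exact mul_le_mul_of_nonneg_right (le_abs_self a) (hn.nonneg x)
  refine ⟨g.mkContinuous C fun y => abs_le.2 ⟨?_, (hg y).trans (hbd y).2⟩, ?_, hg⟩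
  · have h := hg (-y)
    rw [map_neg, ← neg_one_smul ℝ y, hsmul, abs_neg, abs_one, one_mul] at h
    linarith [(hbd y).2]
  · exact (hgx ⟨x, Submodule.mem_span_singleton_self x⟩).trans
      (LinearPMap.mkSpanSingleton'_apply_self _ _ _ _)

theorem IsEquivNorm.le_of_tendsto {ι : Type*} {l : Filter ι} [l.NeBot] (hn : IsEquivNorm n)
    {x : ι → X} {x₀ : X} {m : ℝ}
    (hweak : ∀ ξ : X →L[ℝ] ℝ, Tendsto (fun i => ξ (x i)) l (𝓝 (ξ x₀)))
    (hnx : Tendsto (fun i => n (x i)) l (𝓝 m)) : n x₀ ≤ m := by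
  obtain ⟨φ, hφx, hφ⟩ := hn.exists_clm_eq_le x₀
  exact hφx ▸ le_of_tendsto_of_tendsto' (hweak φ) hnx fun i => hφ (x i)

end EquivNorm

section Kadec

variable {X : Type*} [NormedAddCommGroup X] [NormedSpace ℝ X] {ι : Type*} {l : Filter ι}

theorem tendsto_weakTopology_iff {x : ι → X} {x₀ : X} :
    Tendsto x l (@nhds X (weakTopology X) x₀) ↔
      ∀ ξ : X →L[ℝ] ℝ, Tendsto (fun i => ξ (x i)) l (𝓝 (ξ x₀)) := by
  change Tendsto x l (@nhds X (⨅ ξ : X →L[ℝ] ℝ,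
    TopologicalSpace.induced (fun x => ξ x) inferInstance) x₀) ↔ _
  simp only [nhds_iInf, tendsto_iInf, nhds_induced, tendsto_comap_iff]
  rfl

theorem IsKadec.tendsto_of_forall_tendsto {n : X → ℝ} (hK : IsKadec n) {x : ι → X} {x₀ : X}
    (hx : ∀ i, n (x i) = 1) (hx₀ : n x₀ = 1)
    (hweak : ∀ ξ : X →L[ℝ] ℝ, Tendsto (fun i => ξ (x i)) l (𝓝 (ξ x₀))) :
    Tendsto x l (𝓝 x₀) := by
  let y : ι → {x : X // n x = 1} := fun i => ⟨x i, hx i⟩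
  have h : Tendsto y l
      (@nhds _ (TopologicalSpace.induced Subtype.val (weakTopology X)) ⟨x₀, hx₀⟩) := by
    rw [@nhds_induced X _ (weakTopology X), tendsto_comap_iff]
    exact tendsto_weakTopology_iff.2 hweak
  rw [hK, nhds_induced, tendsto_comap_iff] at h
  exact h

theorem IsKadec.tendsto_of_tendsto_of_forall_tendsto {n : X → ℝ} (hn : IsEquivNorm n)
    (hK : IsKadec n) {x : ι → X} {x₀ : X} (hx : ∀ i, x i ≠ 0) (hx₀ : x₀ ≠ 0)
    (hnx : Tendsto (fun i => n (x i)) l (𝓝 (n x₀)))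
    (hweak : ∀ ξ : X →L[ℝ] ℝ, Tendsto (fun i => ξ (x i)) l (𝓝 (ξ x₀))) :
    Tendsto x l (𝓝 x₀) := by
  have hunit := hK.tendsto_of_forall_tendsto (x := fun i => (n (x i))⁻¹ • x i)
    (fun i => hn.inv_smul_self (hx i)) (hn.inv_smul_self hx₀) fun ξ => by
      simpa only [map_smul, smul_eq_mul] using (hnx.inv₀ (hn.pos hx₀).ne').mul (hweak ξ)
  simpa [smul_smul, (hn.pos (hx _)).ne', (hn.pos hx₀).ne'] using hnx.smul hunit

end Kadec

section DisjointSupports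

open scoped ZeroAtInfty

variable {X : Type*} [TopologicalSpace X]

theorem ZeroAtInftyContinuousMap.norm_apply_le (f : C₀(X, ℝ)) (x : X) : ‖f x‖ ≤ ‖f‖ :=
  norm_toBCF_eq_norm (f := f) ▸ f.toBCF.norm_coe_le_norm x

theorem ZeroAtInftyContinuousMap.norm_sum_le_of_pairwise_disjoint_support {h : ℕ → C₀(X, ℝ)}
    {M : ℝ} (hM : ∀ k, ‖h k‖ ≤ M) (hdisj : Pairwise (Disjoint on fun k => support (h k)))
    {ε : ℕ → ℝ} (hε : ∀ k, |ε k| ≤ 1) (s : Finset ℕ) : ‖∑ k ∈ s, ε k • h k‖ ≤ M := by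
  have hM0 : 0 ≤ M := (norm_nonneg _).trans (hM 0)
  rw [← norm_toBCF_eq_norm, BoundedContinuousFunction.norm_le hM0]
  intro x
  have hsum : (∑ k ∈ s, ε k • h k) x = ∑ k ∈ s, ε k * h k x :=
    map_sum (⟨⟨fun f : C₀(X, ℝ) => f x, rfl⟩, fun _ _ => rfl⟩ : C₀(X, ℝ) →+ ℝ) _ s
  change ‖(∑ k ∈ s, ε k • h k) x‖ ≤ M
  rw [hsum]
  by_cases hx : ∃ k ∈ s, h k x ≠ 0
  · obtain ⟨k, hks, hkx⟩ := hx
    rw [Finset.sum_eq_single_of_mem k hks fun j _ hjk => by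
      rw [notMem_support.1 fun hj => (hdisj hjk).notMem_of_mem_left hj hkx, mul_zero]]
    calc ‖ε k * h k x‖ = |ε k| * ‖h k x‖ := by rw [norm_mul, Real.norm_eq_abs]
      _ ≤ 1 * ‖h k‖ := mul_le_mul (hε k) ((h k).norm_apply_le x) (norm_nonneg _) zero_le_one
      _ ≤ M := by rw [one_mul]; exact hM k
  · push Not at hx
    rw [Finset.sum_eq_zero fun k hk => by rw [hx k hk, mul_zero], norm_zero]
    exact hM0

/-- Testing `ξ` on `∑ ± h k` shows that `∑ |ξ (h k)| ≤ ‖ξ‖ M`. -/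
theorem ZeroAtInftyContinuousMap.tendsto_zero_of_pairwise_disjoint_support
    {h : ℕ → C₀(X, ℝ)} {M : ℝ} (hM : ∀ k, ‖h k‖ ≤ M)
    (hdisj : Pairwise (Disjoint on fun k => support (h k))) (ξ : C₀(X, ℝ) →L[ℝ] ℝ) :
    Tendsto (fun k => ξ (h k)) atTop (𝓝 0) := by
  let ε : ℕ → ℝ := fun k => SignType.sign (ξ (h k))
  have hε : ∀ k, |ε k| ≤ 1 := fun k => by
    rcases lt_trichotomy (ξ (h k)) 0 with h' | h' | h' <;> simp [ε, h']
  have hpartial : ∀ N, ∑ k ∈ Finset.range N, |ξ (h k)| ≤ ‖ξ‖ * M := fun N =>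
    calc ∑ k ∈ Finset.range N, |ξ (h k)| = ξ (∑ k ∈ Finset.range N, ε k • h k) := by
          simp only [map_sum, map_smul, smul_eq_mul, ε, sign_mul_self]
      _ ≤ ‖ξ‖ * M := (le_abs_self _).trans
          (ξ.le_opNorm_of_le (norm_sum_le_of_pairwise_disjoint_support hM hdisj hε _))
  exact (tendsto_zero_iff_abs_tendsto_zero _).2
    (summable_of_sum_range_le (fun k => abs_nonneg _) hpartial).tendsto_atTop_zero

end DisjointSupports

theorem exists_injective_forall_mem_of_infinite {α : Type*} {S : ℕ → Set α}
    (hS : ∀ k, (S k).Infinite) : ∃ u : ℕ → α, Injective u ∧ ∀ k, u k ∈ S k := by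
  classical
  choose g hgS hgF using fun k (F : Finset α) => (hS k).exists_notMem_finset F
  -- `F k` records the first `k` chosen points
  let F : ℕ → Finset α := fun k => Nat.rec ∅ (fun k F => insert (g k F) F) k
  have hF : Monotone F := monotone_nat_of_le_succ fun k => Finset.subset_insert _ _
  refine ⟨fun k => g k (F k), Injective.of_lt_imp_ne fun j k hjk hgjk => ?_, fun k => hgS _ _⟩
  exact hgF k (F k) (hgjk ▸ hF hjk (Finset.mem_insert_self _ _))

section BadPoint

variable {Υ : Type*} [PartialOrder Υ]

theorem infinite_setOf_covBy_lt_of_not_goodPoint {ρ : Υ → ℝ} {t : Υ} (h : ¬ GoodPoint ρ t)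
    {c : ℝ} (hc : ρ t < c) : {u | t ⋖ u ∧ ρ u < c}.Infinite := fun hfin =>
  h ⟨hfin.toFinset, c, hc, fun _ hu huF =>
    not_lt.1 fun hlt => huF (hfin.mem_toFinset.2 ⟨hu, hlt⟩)⟩

theorem exists_injective_covBy_of_not_goodPoint {ρ : Υ → ℝ} {t : Υ} (h : ¬ GoodPoint ρ t) :
    ∃ u : ℕ → Υ, Injective u ∧ ∀ k : ℕ, t ⋖ u k ∧ ρ (u k) < ρ t + 1 / (k + 1) :=
  exists_injective_forall_mem_of_infinite fun _ =>
    infinite_setOf_covBy_lt_of_not_goodPoint h (lt_add_of_pos_right _ Nat.one_div_pos_of_nat)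

end BadPoint

section Mu

variable {Υ : Type*} [PartialOrder Υ] {n : C0Tree Υ → ℝ}

/-- The competitors `𝟙_(0,t] + f'`, `supp f' ⊆ (t, ∞)`, in the definition of `muFn`. -/
def muAdmissible (t : Υ) : Set (C0Tree Υ) :=
  {f | (∀ s : Υ, s ≤ t → f (toTree s) = 1) ∧ ∀ s : Υ, ¬ s ≤ t → ¬ t < s → f (toTree s) = 0}

theorem muAdmissible_nonempty (htree : IsTree Υ) (hH : IsHausdorffTree Υ) (t : Υ) :
    (muAdmissible t).Nonempty :=
  let ⟨e, he₁, he₀⟩ := exists_C0Tree_indicator_Iic htree hH t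
  ⟨e, he₁, fun s hs _ => he₀ s hs⟩

theorem muAdmissible_subset_of_le (htree : IsTree Υ) {t u : Υ} (htu : t ≤ u) :
    muAdmissible u ⊆ muAdmissible t := by
  rintro f ⟨hf₁, hf₀⟩
  refine ⟨fun s hs => hf₁ s (hs.trans htu), fun s hst hts => hf₀ s (fun hsu => ?_) ?_⟩
  · rcases htree.le_total_of_le hsu htu with h | h
    · exact hst h
    · exact hts (h.lt_of_ne fun h => hst h.ge)
  · exact fun hus => hts (htu.trans_lt hus)

theorem ne_zero_of_mem_muAdmissible {t : Υ} {f : C0Tree Υ} (hf : f ∈ muAdmissible t) : f ≠ 0 :=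
  fun h => one_ne_zero ((hf.1 t le_rfl).symm.trans (congrArg (· (toTree t)) h))

theorem muFn_le_of_mem (hn : IsEquivNorm n) {t : Υ} {f : C0Tree Υ} (hf : f ∈ muAdmissible t) :
    muFn n t ≤ n f :=
  csInf_le ⟨0, by rintro _ ⟨g, -, rfl⟩; exact hn.nonneg g⟩ (mem_image_of_mem n hf)

theorem exists_mem_muAdmissible_lt (htree : IsTree Υ) (hH : IsHausdorffTree Υ) (t : Υ)
    {δ : ℝ} (hδ : 0 < δ) : ∃ f ∈ muAdmissible t, n f < muFn n t + δ := by
  obtain ⟨_, ⟨f, hf, rfl⟩, hlt⟩ :=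
    Real.lt_sInf_add_pos ((muAdmissible_nonempty htree hH t).image n) hδ
  exact ⟨f, hf, hlt⟩

theorem apply_eq_indicator_of_mem_muAdmissible (htree : IsTree Υ) {t u : Υ} (htu : t ⋖ u)
    {f e : C0Tree Υ} (hf : f ∈ muAdmissible u) (he₁ : ∀ s ≤ t, e (toTree s) = 1)
    (he₀ : ∀ s, ¬ s ≤ t → e (toTree s) = 0) {s : Υ} (hus : ¬ u ≤ s) :
    f (toTree s) = e (toTree s) := by
  by_cases hst : s ≤ t
  · rw [hf.1 s (hst.trans htu.le), he₁ s hst]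
  refine (hf.2 s (fun hsu => ?_) fun hus' => hus hus'.le).trans (he₀ s hst).symm
  rcases htree.le_total_of_le hsu htu.le with h | hts
  · exact hst h
  have hts : t < s := hts.lt_of_ne fun h => hst h.ge
  exact htu.2 hts (hsu.lt_of_ne fun h => hus h.ge)

theorem exists_seq_muAdmissible_of_not_goodPoint (hn : IsEquivNorm n) (htree : IsTree Υ)
    (hH : IsHausdorffTree Υ) {t : Υ} (h : ¬ GoodPoint (muFn n) t) :
    ∃ (u : ℕ → Υ) (f : ℕ → C0Tree Υ), Injective u ∧
      (∀ k, t ⋖ u k ∧ f k ∈ muAdmissible (u k)) ∧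
      Tendsto (fun k => n (f k)) atTop (𝓝 (muFn n t)) := by
  obtain ⟨u, hu_inj, hu⟩ := exists_injective_covBy_of_not_goodPoint h
  choose f hf hfn using fun k : ℕ =>
    exists_mem_muAdmissible_lt (n := n) htree hH (u k) (Nat.one_div_pos_of_nat (n := k))
  refine ⟨u, f, hu_inj, fun k => ⟨(hu k).1, hf k⟩, ?_⟩
  have hδ := tendsto_one_div_add_atTop_nhds_zero_nat (𝕜 := ℝ)
  have hupper : Tendsto (fun k : ℕ => muFn n t + (1 / (k + 1) + 1 / (k + 1))) atTop
      (𝓝 (muFn n t)) := by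
    simpa using tendsto_const_nhds.add (hδ.add hδ)
  refine tendsto_of_tendsto_of_tendsto_of_le_of_le tendsto_const_nhds hupper
    (fun k => ?_) fun k => ?_
  · exact muFn_le_of_mem hn (muAdmissible_subset_of_le htree (hu k).1.le (hf k))
  · linarith [hfn k, (hu k).2]

theorem tendsto_clm_of_mem_muAdmissible_covBy (hn : IsEquivNorm n) (htree : IsTree Υ) {t : Υ}
    {e : C0Tree Υ} (he₁ : ∀ s ≤ t, e (toTree s) = 1) (he₀ : ∀ s, ¬ s ≤ t → e (toTree s) = 0)
    {u : ℕ → Υ} {f : ℕ → C0Tree Υ} (hu_inj : Injective u)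
    (hu : ∀ k, t ⋖ u k ∧ f k ∈ muAdmissible (u k)) (hbdd : BddAbove (range fun k => n (f k)))
    (ξ : C0Tree Υ →L[ℝ] ℝ) : Tendsto (fun k => ξ (f k)) atTop (𝓝 (ξ e)) := by
  obtain ⟨C, hC, hCn⟩ := hn.exists_norm_le_mul
  obtain ⟨B, hB⟩ := hbdd
  have hbound : ∀ k, ‖f k - e‖ ≤ C * B + ‖e‖ := fun k => (norm_sub_le _ _).trans
    (by gcongr; exact (hCn _).trans (mul_le_mul_of_nonneg_left (hB ⟨k, rfl⟩) hC))
  have hsupp : ∀ k s, (f k - e) (toTree s) ≠ 0 → u k ≤ s := fun k s hs => not_not.1 fun hus =>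
    hs (sub_eq_zero.2 (apply_eq_indicator_of_mem_muAdmissible htree (hu k).1 (hu k).2 he₁ he₀ hus))
  have hdisj : Pairwise (Disjoint on fun k => support (f k - e)) := fun j k hjk =>
    Set.disjoint_left.2 fun s hj hk => Set.disjoint_left.1
      (htree.disjoint_Ici_of_covBy (hu j).1 (hu k).1 (hu_inj.ne hjk)) (hsupp j s hj) (hsupp k s hk)
  simpa using (ZeroAtInftyContinuousMap.tendsto_zero_of_pairwise_disjoint_support hbound
    hdisj ξ).add_const (ξ e)

theorem one_le_norm_sub_of_mem_muAdmissible {t u : Υ} (htu : t < u) {f e : C0Tree Υ}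
    (hf : f ∈ muAdmissible u) (he₀ : ∀ s, ¬ s ≤ t → e (toTree s) = 0) : 1 ≤ ‖f - e‖ := by
  have hval : (f - e) (toTree u) = 1 := by
    rw [ZeroAtInftyContinuousMap.sub_apply, hf.1 u le_rfl, he₀ u htu.not_ge, sub_zero]
  simpa [hval] using (f - e).norm_apply_le (toTree u)

end Mu

/-- Proposition 3.2: if `C₀(Υ)` has an equivalent Kadec norm, the associated function `μ`
has no bad points. -/
theorem statement4 {Υ : Type*} [PartialOrder Υ] (htree : IsTree Υ)
    (hH : IsHausdorffTree Υ)
    (n : C0Tree Υ → ℝ) (hn : IsEquivNorm n) (hK : IsKadec n) :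
    ∀ t : Υ, GoodPoint (muFn n) t := by
  intro t
  by_contra hbad
  obtain ⟨e, he₁, he₀⟩ := exists_C0Tree_indicator_Iic htree hH t
  have he : e ∈ muAdmissible t := ⟨he₁, fun s hs _ => he₀ s hs⟩
  obtain ⟨u, f, hu_inj, hu, hnf⟩ := exists_seq_muAdmissible_of_not_goodPoint hn htree hH hbad
  have hweak := tendsto_clm_of_mem_muAdmissible_covBy hn htree he₁ he₀ hu_inj hu
    hnf.bddAbove_range
  have hne : n e = muFn n t := le_antisymm (hn.le_of_tendsto hweak hnf) (muFn_le_of_mem hn he)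
  have hlim : Tendsto f atTop (𝓝 e) := hK.tendsto_of_tendsto_of_forall_tendsto hn
    (fun k => ne_zero_of_mem_muAdmissible (hu k).2) (ne_zero_of_mem_muAdmissible he)
    (hne ▸ hnf) hweak
  obtain ⟨k, hk⟩ := ((tendsto_iff_norm_sub_tendsto_zero.1 hlim).eventually
    (gt_mem_nhds one_pos)).exists
  exact (one_le_norm_sub_of_mem_muAdmissible (hu k).1.1 (hu k).2 he₀).not_gt hk
end

section
/- Let V be a set, let g, h ∈ ℓ∞(V), and let ε > 0. For f ∈ ℓ∞(V) define osc(f) = sup_{s,t∈V} |f(s) − f(t)| and ‖f‖_osc² = ‖f‖∞² + osc(f)². Suppose there exist real numbers a, b such that g takes all its values in [a−ε, a+ε] ∪ [b−ε, b+ε]. If ‖g+h‖_osc² + ‖g−h‖_osc² − 2‖g‖_osc² < ε², then ‖h‖∞ < 4ε. -/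
open Set

noncomputable section

/-- The sup norm of a bounded function on `V`. -/
def supNorm {V : Type*} (f : V → ℝ) : ℝ := ⨆ v, |f v|

/-- The oscillation of a bounded function on `V`. -/
def osc {V : Type*} (f : V → ℝ) : ℝ := ⨆ p : V × V, |f p.1 - f p.2|

/-- The square of the oscillation norm `‖f‖_osc² = ‖f‖∞² + osc(f)²`. -/
def oscNormSq {V : Type*} (f : V → ℝ) : ℝ := supNorm f ^ 2 + osc f ^ 2

end

section aux

variable {V : Type*}

private lemma abs_sub_le'' (x y : ℝ) : |x - y| ≤ |x| + |y| := by
  have := abs_add_le x (-y); simpa [sub_eq_add_neg] using this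

lemma le_supNorm' {f : V → ℝ} {C : ℝ} (hC : ∀ w, |f w| ≤ C) (v : V) :
    |f v| ≤ supNorm f :=
  le_ciSup ⟨C, by rintro x ⟨w, rfl⟩; exact hC w⟩ v

lemma supNorm_le' [Nonempty V] {f : V → ℝ} {C : ℝ} (hC : ∀ w, |f w| ≤ C) :
    supNorm f ≤ C := ciSup_le hC

lemma le_osc' {f : V → ℝ} {C : ℝ} (hC : ∀ w, |f w| ≤ C) (s t : V) :
    |f s - f t| ≤ osc f := by
  have hbdd : BddAbove (range fun p : V × V => |f p.1 - f p.2|) := by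
    refine ⟨C + C, ?_⟩
    rintro x ⟨p, rfl⟩
    exact le_trans (abs_sub_le'' _ _) (add_le_add (hC p.1) (hC p.2))
  exact le_ciSup hbdd (s, t)

lemma osc_le' [Nonempty V] {f : V → ℝ} {C : ℝ} (hC : ∀ s t, |f s - f t| ≤ C) :
    osc f ≤ C := ciSup_le fun p => hC p.1 p.2

lemma supNorm_neg (f : V → ℝ) : supNorm (-f) = supNorm f := by
  unfold supNorm
  simp only [Pi.neg_apply, abs_neg]

lemma osc_neg (f : V → ℝ) : osc (-f) = osc f := by
  unfold osc
  congr 1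
  funext p
  simp only [Pi.neg_apply]
  rw [show -f p.1 - -f p.2 = -(f p.1 - f p.2) from by ring, abs_neg]

lemma E1_negg (g h : V → ℝ) :
    supNorm (-g + h) ^ 2 + supNorm (-g - h) ^ 2 - 2 * supNorm (-g) ^ 2
      = supNorm (g + h) ^ 2 + supNorm (g - h) ^ 2 - 2 * supNorm g ^ 2 := by
  have e1 : -g + h = -(g - h) := by
    funext w; simp only [Pi.add_apply, Pi.neg_apply, Pi.sub_apply]; ring
  have e2 : -g - h = -(g + h) := by
    funext w; simp only [Pi.add_apply, Pi.neg_apply, Pi.sub_apply]; ring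
  rw [e1, e2, supNorm_neg, supNorm_neg, supNorm_neg]; ring

lemma E2_negg (g h : V → ℝ) :
    osc (-g + h) ^ 2 + osc (-g - h) ^ 2 - 2 * osc (-g) ^ 2
      = osc (g + h) ^ 2 + osc (g - h) ^ 2 - 2 * osc g ^ 2 := by
  have e1 : -g + h = -(g - h) := by
    funext w; simp only [Pi.add_apply, Pi.neg_apply, Pi.sub_apply]; ring
  have e2 : -g - h = -(g + h) := by
    funext w; simp only [Pi.add_apply, Pi.neg_apply, Pi.sub_apply]; ring
  rw [e1, e2, osc_neg, osc_neg, osc_neg]; ring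

lemma E1_negh (g h : V → ℝ) :
    supNorm (g + -h) ^ 2 + supNorm (g - -h) ^ 2 - 2 * supNorm g ^ 2
      = supNorm (g + h) ^ 2 + supNorm (g - h) ^ 2 - 2 * supNorm g ^ 2 := by
  have e1 : g + -h = g - h := by
    funext w; simp only [Pi.add_apply, Pi.neg_apply, Pi.sub_apply]; ring
  have e2 : g - -h = g + h := by
    funext w; simp only [Pi.add_apply, Pi.neg_apply, Pi.sub_apply]; ring
  rw [e1, e2]; ring

lemma E2_negh (g h : V → ℝ) :
    osc (g + -h) ^ 2 + osc (g - -h) ^ 2 - 2 * osc g ^ 2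
      = osc (g + h) ^ 2 + osc (g - h) ^ 2 - 2 * osc g ^ 2 := by
  have e1 : g + -h = g - h := by
    funext w; simp only [Pi.add_apply, Pi.neg_apply, Pi.sub_apply]; ring
  have e2 : g - -h = g + h := by
    funext w; simp only [Pi.add_apply, Pi.neg_apply, Pi.sub_apply]; ring
  rw [e1, e2]; ring

lemma twoN_le [Nonempty V] (g h : V → ℝ) (Cg Ch : ℝ)
    (hCg : ∀ w, |g w| ≤ Cg) (hCh : ∀ w, |h w| ≤ Ch) :
    2 * supNorm g ≤ supNorm (g + h) + supNorm (g - h) := by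
  have hP : ∀ w, |g w + h w| ≤ supNorm (g + h) := fun w => by
    have := le_supNorm' (f := g + h) (C := Cg + Ch) (fun w => by
      simp only [Pi.add_apply]
      exact (abs_add_le _ _).trans (add_le_add (hCg w) (hCh w))) w
    simpa using this
  have hM : ∀ w, |g w - h w| ≤ supNorm (g - h) := fun w => by
    have := le_supNorm' (f := g - h) (C := Cg + Ch) (fun w => by
      simp only [Pi.sub_apply]
      exact (abs_sub_le'' _ _).trans (add_le_add (hCg w) (hCh w))) w
    simpa using this
  have : supNorm g ≤ (supNorm (g + h) + supNorm (g - h)) / 2 := by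
    apply supNorm_le'
    intro w
    obtain ⟨a1, a2⟩ := abs_le.1 (hP w)
    obtain ⟨b1, b2⟩ := abs_le.1 (hM w)
    rw [abs_le]
    constructor <;> linarith
  linarith

lemma twoO_le [Nonempty V] (g h : V → ℝ) (Cg Ch : ℝ)
    (hCg : ∀ w, |g w| ≤ Cg) (hCh : ∀ w, |h w| ≤ Ch) :
    2 * osc g ≤ osc (g + h) + osc (g - h) := by
  have hT : ∀ s t, |(g s + h s) - (g t + h t)| ≤ osc (g + h) := fun s t => by
    have := le_osc' (f := g + h) (C := Cg + Ch) (fun w => by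
      simp only [Pi.add_apply]
      exact (abs_add_le _ _).trans (add_le_add (hCg w) (hCh w))) s t
    simpa using this
  have hU : ∀ s t, |(g s - h s) - (g t - h t)| ≤ osc (g - h) := fun s t => by
    have := le_osc' (f := g - h) (C := Cg + Ch) (fun w => by
      simp only [Pi.sub_apply]
      exact (abs_sub_le'' _ _).trans (add_le_add (hCg w) (hCh w))) s t
    simpa using this
  have : osc g ≤ (osc (g + h) + osc (g - h)) / 2 := by
    apply osc_le'
    intro s t
    obtain ⟨a1, a2⟩ := abs_le.1 (hT s t)
    obtain ⟨b1, b2⟩ := abs_le.1 (hU s t)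
    rw [abs_le]
    constructor <;> linarith
  linarith

set_option maxHeartbeats 1000000 in
lemma core [Nonempty V] (g h : V → ℝ) (ε a b Ch : ℝ) (hε : 0 < ε)
    (hCh : ∀ w, |h w| ≤ Ch)
    (hg : ∀ w, g w ∈ Icc (a - ε) (a + ε) ∪ Icc (b - ε) (b + ε))
    (v u : V) (hu : supNorm g - ε / 8 < g u) (hv0 : 0 ≤ h v)
    (hE : supNorm (g + h) ^ 2 + supNorm (g - h) ^ 2 - 2 * supNorm g ^ 2
        + (osc (g + h) ^ 2 + osc (g - h) ^ 2 - 2 * osc g ^ 2) < ε ^ 2) :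
    h v ≤ 2 * ε + ε / 4
        + Real.sqrt (supNorm (g + h) ^ 2 + supNorm (g - h) ^ 2 - 2 * supNorm g ^ 2)
        + Real.sqrt (osc (g + h) ^ 2 + osc (g - h) ^ 2 - 2 * osc g ^ 2) := by
  have hCg : ∀ w, |g w| ≤ max |a| |b| + ε := by
    intro w
    have l1 := le_abs_self a; have l2 := neg_abs_le a
    have l3 := le_abs_self b; have l4 := neg_abs_le b
    have m1 := le_max_left |a| |b|; have m2 := le_max_right |a| |b|
    rcases hg w with hw | hw <;> obtain ⟨w1, w2⟩ := hw <;> rw [abs_le] <;>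
      constructor <;> linarith
  set Cg := max |a| |b| + ε with hCgdef
  set N := supNorm g with hN
  set P := supNorm (g + h) with hP
  set M := supNorm (g - h) with hM
  set O := osc g with hO
  set T := osc (g + h) with hT
  set U := osc (g - h) with hU
  -- pointwise bounds
  have hghC : ∀ w, |(g + h) w| ≤ Cg + Ch := fun w => by
    simp only [Pi.add_apply]
    exact (abs_add_le _ _).trans (add_le_add (hCg w) (hCh w))
  have hgmhC : ∀ w, |(g - h) w| ≤ Cg + Ch := fun w => by
    simp only [Pi.sub_apply]
    exact (abs_sub_le'' _ _).trans (add_le_add (hCg w) (hCh w))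
  have hPf : ∀ w, |g w + h w| ≤ P := fun w => by
    have := le_supNorm' hghC w; simpa using this
  have hMf : ∀ w, |g w - h w| ≤ M := fun w => by
    have := le_supNorm' hgmhC w; simpa using this
  have hNf : ∀ w, |g w| ≤ N := fun w => le_supNorm' hCg w
  have hOf : ∀ s t, |g s - g t| ≤ O := fun s t => le_osc' hCg s t
  have hUf : ∀ s t, |(g s - h s) - (g t - h t)| ≤ U := fun s t => by
    have := le_osc' hgmhC s t; simpa using this
  have hN0 : 0 ≤ N := le_trans (abs_nonneg _) (hNf v)
  have hO0 : 0 ≤ O := le_trans (abs_nonneg _) (hOf v v)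
  have hPM : 2 * N ≤ P + M := twoN_le g h Cg Ch hCg hCh
  have hTU : 2 * O ≤ T + U := twoO_le g h Cg Ch hCg hCh
  set E₁ := P ^ 2 + M ^ 2 - 2 * N ^ 2 with hE₁
  set E₂ := T ^ 2 + U ^ 2 - 2 * O ^ 2 with hE₂
  have hE₁0 : 0 ≤ E₁ := by
    nlinarith [sq_nonneg (P - M), mul_nonneg hN0 (by linarith : (0:ℝ) ≤ P + M - 2 * N)]
  have hE₂0 : 0 ≤ E₂ := by
    nlinarith [sq_nonneg (T - U), mul_nonneg hO0 (by linarith : (0:ℝ) ≤ T + U - 2 * O)]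
  set η₁ := Real.sqrt E₁ with hη₁def
  set η₂ := Real.sqrt E₂ with hη₂def
  have hη₁0 : 0 ≤ η₁ := Real.sqrt_nonneg _
  have hη₂0 : 0 ≤ η₂ := Real.sqrt_nonneg _
  have hη₁sq : η₁ ^ 2 = E₁ := Real.sq_sqrt hE₁0
  have hη₂sq : η₂ ^ 2 = E₂ := Real.sq_sqrt hE₂0
  have hPle : P ≤ N + η₁ := by
    have key : (P - N) ^ 2 ≤ E₁ := by
      nlinarith [sq_nonneg (M - N),
        mul_nonneg hN0 (by linarith : (0:ℝ) ≤ P + M - 2 * N)]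
    have : P - N ≤ η₁ := by
      calc P - N ≤ |P - N| := le_abs_self _
        _ = Real.sqrt ((P - N) ^ 2) := (Real.sqrt_sq_eq_abs _).symm
        _ ≤ η₁ := Real.sqrt_le_sqrt key
    linarith
  have hUle : U ≤ O + η₂ := by
    have key : (U - O) ^ 2 ≤ E₂ := by
      nlinarith [sq_nonneg (T - O),
        mul_nonneg hO0 (by linarith : (0:ℝ) ≤ T + U - 2 * O)]
    have : U - O ≤ η₂ := by
      calc U - O ≤ |U - O| := le_abs_self _
        _ = Real.sqrt ((U - O) ^ 2) := (Real.sqrt_sq_eq_abs _).symm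
        _ ≤ η₂ := Real.sqrt_le_sqrt key
    linarith
  have hhu : h u ≤ η₁ + ε / 8 := by
    have h1 : g u + h u ≤ P := le_trans (le_abs_self _) (hPf u)
    linarith
  by_cases hN2 : N ≤ 2 * ε
  · -- small sup norm case
    have h1 : (g v + h v) ^ 2 ≤ P ^ 2 := by
      have := hPf v
      nlinarith [abs_nonneg (g v + h v), sq_abs (g v + h v)]
    have h2 : (g v - h v) ^ 2 ≤ M ^ 2 := by
      have := hMf v
      nlinarith [abs_nonneg (g v - h v), sq_abs (g v - h v)]
    have hθ2 : h v ^ 2 ≤ N ^ 2 + E₁ / 2 := by nlinarith [sq_nonneg (g v)]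
    have : h v ≤ N + η₁ := by
      nlinarith [mul_nonneg hN0 hη₁0]
    linarith
  · push_neg at hN2
    by_cases hv1 : N - 2 * ε - ε / 8 < g v
    · -- v near the top
      have h1 : g v + h v ≤ P := le_trans (le_abs_self _) (hPf v)
      linarith
    · push_neg at hv1
      -- v in the other interval; use the oscillation
      have inner : ∀ c c₂ : ℝ, c - ε ≤ g v → g v ≤ c + ε → g u ≤ c₂ + ε →
          (∀ w, c - ε ≤ g w ∨ c₂ - ε ≤ g w) →
          h v ≤ 2 * ε + ε / 4 + η₁ + η₂ := by
        intro c c₂ hc1 hc2 hc3 hall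
        have hcN : c ≤ N - ε - ε / 8 := by
          by_contra hcontra
          push_neg at hcontra
          linarith
        have hc₂N : N - ε - ε / 8 < c₂ := by linarith
        have hlow : ∀ w, c - ε ≤ g w := fun w => by
          rcases hall w with hw | hw
          · exact hw
          · linarith
        have hON : O ≤ N - c + ε := by
          apply osc_le'
          intro s t
          have hs := abs_le.1 (hNf s)
          have ht := abs_le.1 (hNf t)
          have hls := hlow s
          have hlt := hlow t
          rw [abs_le]
          constructor <;> linarith
        have hUge : (g u - h u) - (g v - h v) ≤ U :=
          le_trans (le_abs_self _) (hUf u v)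
        linarith
      rcases hg v with hva | hvb <;> rcases hg u with hua | hub
      · exfalso
        obtain ⟨x1, x2⟩ := hva; obtain ⟨y1, y2⟩ := hua
        linarith
      · have := inner a b hva.1 hva.2 hub.2 (fun w => by
          rcases hg w with hw | hw
          · exact Or.inl hw.1
          · exact Or.inr hw.1)
        linarith
      · have := inner b a hvb.1 hvb.2 hua.2 (fun w => by
          rcases hg w with hw | hw
          · exact Or.inr hw.1
          · exact Or.inl hw.1)
        linarith
      · exfalso
        obtain ⟨x1, x2⟩ := hvb; obtain ⟨y1, y2⟩ := hub
        linarith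

lemma coreh [Nonempty V] (g h : V → ℝ) (ε a b Ch : ℝ) (hε : 0 < ε)
    (hCh : ∀ w, |h w| ≤ Ch)
    (hg : ∀ w, g w ∈ Icc (a - ε) (a + ε) ∪ Icc (b - ε) (b + ε))
    (u : V) (hu : supNorm g - ε / 8 < g u)
    (hE : supNorm (g + h) ^ 2 + supNorm (g - h) ^ 2 - 2 * supNorm g ^ 2
        + (osc (g + h) ^ 2 + osc (g - h) ^ 2 - 2 * osc g ^ 2) < ε ^ 2) (v : V) :
    |h v| ≤ 2 * ε + ε / 4
        + Real.sqrt (supNorm (g + h) ^ 2 + supNorm (g - h) ^ 2 - 2 * supNorm g ^ 2)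
        + Real.sqrt (osc (g + h) ^ 2 + osc (g - h) ^ 2 - 2 * osc g ^ 2) := by
  rcases le_total 0 (h v) with hv0 | hv0
  · rw [abs_of_nonneg hv0]
    exact core g h ε a b Ch hε hCh hg v u hu hv0 hE
  · rw [abs_of_nonpos hv0]
    have hCh' : ∀ w, |(-h) w| ≤ Ch := fun w => by
      simpa using hCh w
    have hv0' : 0 ≤ (-h) v := by simpa using neg_nonneg.2 hv0
    have hE' : supNorm (g + -h) ^ 2 + supNorm (g - -h) ^ 2 - 2 * supNorm g ^ 2
        + (osc (g + -h) ^ 2 + osc (g - -h) ^ 2 - 2 * osc g ^ 2) < ε ^ 2 := by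
      rw [E1_negh, E2_negh]; linarith
    have := core g (-h) ε a b Ch hε hCh' hg v u hu hv0' hE'
    rw [E1_negh, E2_negh] at this
    simpa using this

end aux

set_option maxHeartbeats 1000000 in
/-- Lemma 5.2 (second assertion): near-two-valued functions are quantitative points of
midpoint local uniform convexity for the oscillation norm. -/
theorem statement8 {V : Type*} (g h : V → ℝ) (ε a b : ℝ) (hε : 0 < ε)
    (hbd : BddAbove (Set.range fun v => |h v|))
    (hg : ∀ v, g v ∈ Set.Icc (a - ε) (a + ε) ∪ Set.Icc (b - ε) (b + ε))
    (hyp : oscNormSq (g + h) + oscNormSq (g - h) - 2 * oscNormSq g < ε ^ 2) :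
    supNorm h < 4 * ε := by
  rcases isEmpty_or_nonempty V with hV | hV
  · have h0 : supNorm h = 0 := by
      haveI := hV
      unfold supNorm
      exact Real.iSup_of_isEmpty _
    rw [h0]; linarith
  · obtain ⟨Ch, hCh'⟩ := hbd
    have hCh : ∀ w, |h w| ≤ Ch := fun w => hCh' ⟨w, rfl⟩
    have hCg : ∀ w, |g w| ≤ max |a| |b| + ε := by
      intro w
      have l1 := le_abs_self a; have l2 := neg_abs_le a
      have l3 := le_abs_self b; have l4 := neg_abs_le b
      have m1 := le_max_left |a| |b|; have m2 := le_max_right |a| |b|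
      rcases hg w with hw | hw <;> obtain ⟨w1, w2⟩ := hw <;> rw [abs_le] <;>
        constructor <;> linarith
    have hyp' : supNorm (g + h) ^ 2 + supNorm (g - h) ^ 2 - 2 * supNorm g ^ 2
        + (osc (g + h) ^ 2 + osc (g - h) ^ 2 - 2 * osc g ^ 2) < ε ^ 2 := by
      simp only [oscNormSq] at hyp
      linarith
    -- nonnegativity of the two defects
    have hN0 : 0 ≤ supNorm g :=
      le_trans (abs_nonneg _) (le_supNorm' hCg (Classical.arbitrary V))
    have hO0 : 0 ≤ osc g :=
      le_trans (abs_nonneg _) (le_osc' hCg (Classical.arbitrary V) (Classical.arbitrary V))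
    have hPM := twoN_le g h _ Ch hCg hCh
    have hTU := twoO_le g h _ Ch hCg hCh
    have hE₁0 : 0 ≤ supNorm (g + h) ^ 2 + supNorm (g - h) ^ 2 - 2 * supNorm g ^ 2 := by
      nlinarith [sq_nonneg (supNorm (g + h) - supNorm (g - h)),
        mul_nonneg hN0 (by linarith : (0:ℝ) ≤ supNorm (g + h) + supNorm (g - h) - 2 * supNorm g)]
    have hE₂0 : 0 ≤ osc (g + h) ^ 2 + osc (g - h) ^ 2 - 2 * osc g ^ 2 := by
      nlinarith [sq_nonneg (osc (g + h) - osc (g - h)),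
        mul_nonneg hO0 (by linarith : (0:ℝ) ≤ osc (g + h) + osc (g - h) - 2 * osc g)]
    -- a near maximizer of |g|
    have hlt : supNorm g - ε / 8 < ⨆ w, |g w| := by
      have : supNorm g - ε / 8 < supNorm g := by linarith
      simpa [supNorm] using this
    obtain ⟨u, hu⟩ := exists_lt_of_lt_ciSup hlt
    have key : ∀ v, |h v| ≤ 2 * ε + ε / 4
        + Real.sqrt (supNorm (g + h) ^ 2 + supNorm (g - h) ^ 2 - 2 * supNorm g ^ 2)
        + Real.sqrt (osc (g + h) ^ 2 + osc (g - h) ^ 2 - 2 * osc g ^ 2) := by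
      intro v
      rcases abs_cases (g u) with ⟨hgu, _⟩ | ⟨hgu, _⟩
      · rw [hgu] at hu
        exact coreh g h ε a b Ch hε hCh hg u hu hyp' v
      · -- apply with -g
        have hg' : ∀ w, (-g) w ∈ Icc (-a - ε) (-a + ε) ∪ Icc (-b - ε) (-b + ε) := by
          intro w
          rcases hg w with hw | hw
          · left; simp only [Pi.neg_apply, mem_Icc]
            obtain ⟨w1, w2⟩ := hw
            constructor <;> linarith
          · right; simp only [Pi.neg_apply, mem_Icc]
            obtain ⟨w1, w2⟩ := hw
            constructor <;> linarith
        rw [hgu] at hu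
        have hu' : supNorm (-g) - ε / 8 < (-g) u := by
          rw [supNorm_neg]
          simp only [Pi.neg_apply]
          linarith
        have hE' : supNorm (-g + h) ^ 2 + supNorm (-g - h) ^ 2 - 2 * supNorm (-g) ^ 2
            + (osc (-g + h) ^ 2 + osc (-g - h) ^ 2 - 2 * osc (-g) ^ 2) < ε ^ 2 := by
          rw [E1_negg, E2_negg]; linarith
        have := coreh (-g) h ε (-a) (-b) Ch hε hCh hg' u hu' hE' v
        rw [E1_negg, E2_negg] at this
        exact this
    have hsup : supNorm h ≤ 2 * ε + ε / 4
        + Real.sqrt (supNorm (g + h) ^ 2 + supNorm (g - h) ^ 2 - 2 * supNorm g ^ 2)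
        + Real.sqrt (osc (g + h) ^ 2 + osc (g - h) ^ 2 - 2 * osc g ^ 2) :=
      supNorm_le' key
    have hs₁ := Real.sqrt_nonneg (supNorm (g + h) ^ 2 + supNorm (g - h) ^ 2 - 2 * supNorm g ^ 2)
    have hs₂ := Real.sqrt_nonneg (osc (g + h) ^ 2 + osc (g - h) ^ 2 - 2 * osc g ^ 2)
    have hq₁ := Real.sq_sqrt hE₁0
    have hq₂ := Real.sq_sqrt hE₂0
    have hfinal : Real.sqrt (supNorm (g + h) ^ 2 + supNorm (g - h) ^ 2 - 2 * supNorm g ^ 2)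
        + Real.sqrt (osc (g + h) ^ 2 + osc (g - h) ^ 2 - 2 * osc g ^ 2) < 7 / 4 * ε := by
      nlinarith [sq_nonneg (Real.sqrt (supNorm (g + h) ^ 2 + supNorm (g - h) ^ 2 - 2 * supNorm g ^ 2)
        - Real.sqrt (osc (g + h) ^ 2 + osc (g - h) ^ 2 - 2 * osc g ^ 2)),
        mul_nonneg hs₁ hs₂, mul_pos hε hε]
    linarith
end

section
/- Let Λ be the tree of all injective functions t from a countable ordinal dom(t) into ℕ whose range ℕ \ ran(t) is infinite (i.e. ran(t) is coinfinite), ordered by extension of functions, and define λ : Λ → ℝ by λ(t) = Σ_{α ∈ dom(t)} 2^{−t(α)}. Equip Λ with the λ-topology, in which the basic neighbourhoods of t are the sets {u ∈ Λ : t ⪯ u and λ(u) < λ(t) + ε} for ε > 0. Then Λ with the λ-topology is a Baire space. -/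
open Filter Topology Set

/-- The tree `Λ` of injective functions from a countable ordinal into `ℕ` with coinfinite
range (normalised to take the value `0` beyond their domain), ordered by extension. -/
def LambdaTree : Type 1 :=
  {p : Ordinal.{0} × (Ordinal.{0} → ℕ) //
    p.1 < (Cardinal.aleph 1).ord ∧
    (∀ β, p.1 ≤ β → p.2 β = 0) ∧
    Set.InjOn p.2 (Set.Iio p.1) ∧
    (p.2 '' Set.Iio p.1)ᶜ.Infinite}

instance : PartialOrder LambdaTree where
  le s t := s.1.1 ≤ t.1.1 ∧ ∀ β, β < s.1.1 → s.1.2 β = t.1.2 β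
  le_refl s := ⟨le_rfl, fun _ _ => rfl⟩
  le_trans s t u hst htu :=
    ⟨hst.1.trans htu.1, fun β hβ => (hst.2 β hβ).trans (htu.2 β (lt_of_lt_of_le hβ hst.1))⟩
  le_antisymm s t hst hts := by
    have hd : s.1.1 = t.1.1 := le_antisymm hst.1 hts.1
    apply Subtype.ext
    apply Prod.ext
    · exact hd
    · funext β
      by_cases hβ : β < s.1.1
      · exact hst.2 β hβ
      · rw [s.2.2.1 β (not_lt.mp hβ), t.2.2.1 β (hd ▸ not_lt.mp hβ)]

/-- The function `λ(t) = Σ_{α ∈ dom t} 2^{-t(α)}` on the tree `Λ`. -/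
noncomputable def lamFn (t : LambdaTree) : ℝ :=
  ∑' β : (Set.Iio t.1.1), ((1 : ℝ) / 2) ^ (t.1.2 β)

/-- The λ-topology on `Λ`: basic neighbourhoods of `t` are the sets
`{u : t ⪯ u, λ(u) < λ(t) + ε}`. -/
noncomputable def lambdaTopology : TopologicalSpace LambdaTree :=
  TopologicalSpace.generateFrom
    {S | ∃ (t : LambdaTree) (ε : ℝ), 0 < ε ∧ S = {u : LambdaTree | t ≤ u ∧ lamFn u < lamFn t + ε}}

/-- The tree `Λ` carrying the λ-topology. -/
def LambdaSpace : Type 1 := LambdaTree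

noncomputable instance : TopologicalSpace LambdaSpace := lambdaTopology


/-! A nested sequence of basic neighbourhoods `{u : t ⪯ u, λ(u) < λ(t) + ε}` has centres
forming a chain, and the union of that chain lies in all of them (`λ` is continuous along
chains), provided the union still has coinfinite range, i.e. is a point of `Λ`. This is
arranged by choosing at stage `n` a radius `ε ≤ 2^{-m}` for some `m ≥ n` missing from the
range of the centre: adding `m` later would raise `λ` by `2^{-m}`, leaving the neighbourhood.
The usual nested-neighbourhood argument then gives the Baire property. -/

noncomputable section

def dyadicWeight (A : Set ℕ) : ℝ := ∑' k : A, (1 / 2 : ℝ) ^ (k : ℕ)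

lemma dyadicWeight_eq_tsum_indicator (A : Set ℕ) :
    dyadicWeight A = ∑' k, A.indicator (fun k => (1 / 2 : ℝ) ^ k) k :=
  tsum_subtype A _

lemma summable_indicator_geometric (A : Set ℕ) :
    Summable (A.indicator fun k => (1 / 2 : ℝ) ^ k) :=
  summable_geometric_two.indicator A

lemma dyadicWeight_mono {A C : Set ℕ} (h : A ⊆ C) : dyadicWeight A ≤ dyadicWeight C := by
  rw [dyadicWeight_eq_tsum_indicator, dyadicWeight_eq_tsum_indicator]
  exact (summable_indicator_geometric A).tsum_le_tsum
    (fun k => indicator_le_indicator_of_subset h (fun k => by positivity) k)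
    (summable_indicator_geometric C)

lemma dyadicWeight_insert {A : Set ℕ} {m : ℕ} (hm : m ∉ A) :
    dyadicWeight (insert m A) = dyadicWeight A + (1 / 2 : ℝ) ^ m := by
  rw [dyadicWeight, insert_eq, union_comm,
    (summable_geometric_two.subtype _).tsum_union_disjoint (disjoint_singleton_right.2 hm)
      (summable_geometric_two.subtype _), tsum_singleton, dyadicWeight]

lemma tendsto_dyadicWeight_iUnion {A : ℕ → Set ℕ} (hA : Monotone A) :
    Tendsto (fun n => dyadicWeight (A n)) atTop (𝓝 (dyadicWeight (⋃ n, A n))) := by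
  simp only [dyadicWeight_eq_tsum_indicator]
  refine tendsto_tsum_of_dominated_convergence summable_geometric_two (fun k => ?_)
    (Eventually.of_forall fun n k => ?_)
  · refine tendsto_const_nhds.congr' ?_
    by_cases hk : k ∈ ⋃ n, A n
    · obtain ⟨N, hN⟩ := mem_iUnion.1 hk
      filter_upwards [eventually_ge_atTop N] with n hn
      rw [indicator_of_mem hk, indicator_of_mem (hA hn hN)]
    · exact Eventually.of_forall fun n => (indicator_of_notMem hk _).trans
        (indicator_of_notMem (fun h => hk (mem_iUnion_of_mem n h)) _).symm
  · rw [Real.norm_of_nonneg (indicator_nonneg (fun k _ => by positivity) k)]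
    exact indicator_le_self' (fun k _ => by positivity) k

end

namespace LambdaTree

def ran (t : LambdaTree) : Set ℕ := t.1.2 '' Iio t.1.1

lemma ran_mono : Monotone ran := by
  rintro s t h k ⟨β, hβ, rfl⟩
  exact ⟨β, lt_of_lt_of_le hβ h.1, (h.2 β hβ).symm⟩

lemma lamFn_eq_dyadicWeight (t : LambdaTree) : lamFn t = dyadicWeight (ran t) :=
  (tsum_image (fun k : ℕ => (1 / 2 : ℝ) ^ k) t.2.2.2.1).symm

lemma lamFn_add_le_of_mem {s t : LambdaTree} (h : s ≤ t) {m : ℕ} (hmt : m ∈ ran t)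
    (hms : m ∉ ran s) : lamFn s + (1 / 2 : ℝ) ^ m ≤ lamFn t := by
  rw [lamFn_eq_dyadicWeight, lamFn_eq_dyadicWeight, ← dyadicWeight_insert hms]
  exact dyadicWeight_mono (insert_subset hmt (ran_mono h))

noncomputable def chainVal (x : ℕ → LambdaTree) (β : Ordinal.{0}) : ℕ :=
  open Classical in
  if h : ∃ n, β < (x n).1.1 then (x (Nat.find h)).1.2 β else 0

lemma chainVal_eq {x : ℕ → LambdaTree} (hx : Monotone x) {n : ℕ} {β : Ordinal.{0}}
    (hβ : β < (x n).1.1) : chainVal x β = (x n).1.2 β := by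
  classical
  have h : ∃ n, β < (x n).1.1 := ⟨n, hβ⟩
  rw [chainVal, dif_pos h]
  exact (hx (Nat.find_min' h hβ)).2 β (Nat.find_spec h)

theorem exists_ub_ran_eq_iUnion {x : ℕ → LambdaTree} (hx : Monotone x)
    (hcoinf : (⋃ n, ran (x n))ᶜ.Infinite) :
    ∃ u : LambdaTree, (∀ n, x n ≤ u) ∧ ran u = ⋃ n, ran (x n) := by
  classical
  set α : Ordinal.{0} := ⨆ n, (x n).1.1
  have hlt : ∀ β, β < α ↔ ∃ n, β < (x n).1.1 := fun β => Ordinal.lt_iSup_iff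
  have hran : chainVal x '' Iio α = ⋃ n, ran (x n) := by
    ext k
    simp only [mem_image, mem_Iio, hlt, mem_iUnion, ran]
    constructor
    · rintro ⟨β, ⟨n, hn⟩, rfl⟩
      exact ⟨n, β, hn, (chainVal_eq hx hn).symm⟩
    · rintro ⟨n, β, hn, rfl⟩
      exact ⟨β, ⟨n, hn⟩, chainVal_eq hx hn⟩
  have hdom : α < (Cardinal.aleph 1).ord := by
    rw [Cardinal.ord_aleph]
    exact Ordinal.iSup_lt_omega_one fun n => Cardinal.ord_aleph 1 ▸ (x n).2.1
  have hzero : ∀ β, α ≤ β → chainVal x β = 0 := fun β hβ =>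
    dif_neg fun h => hβ.not_gt ((hlt β).2 h)
  have hinj : InjOn (chainVal x) (Iio α) := by
    intro β₁ hβ₁ β₂ hβ₂ heq
    obtain ⟨n₁, hn₁⟩ := (hlt β₁).1 hβ₁
    obtain ⟨n₂, hn₂⟩ := (hlt β₂).1 hβ₂
    have h₁ := hn₁.trans_le (hx (le_max_left n₁ n₂)).1
    have h₂ := hn₂.trans_le (hx (le_max_right n₁ n₂)).1
    rw [chainVal_eq hx h₁, chainVal_eq hx h₂] at heq
    exact (x (max n₁ n₂)).2.2.2.1 h₁ h₂ heq
  refine ⟨⟨(α, chainVal x), hdom, hzero, hinj, hran ▸ hcoinf⟩,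
    fun n => ⟨Ordinal.le_iSup _ n, fun β hβ => (chainVal_eq hx hβ).symm⟩, hran⟩

end LambdaTree

namespace LambdaSpace

open TopologicalSpace LambdaTree

def basicNbhd (t : LambdaTree) (ε : ℝ) : Set LambdaTree :=
  {u | t ≤ u ∧ lamFn u < lamFn t + ε}

lemma mem_basicNbhd_self {t : LambdaTree} {ε : ℝ} (hε : 0 < ε) : t ∈ basicNbhd t ε :=
  ⟨le_rfl, lt_add_of_pos_right _ hε⟩

lemma basicNbhd_mono (t : LambdaTree) {δ ε : ℝ} (h : δ ≤ ε) : basicNbhd t δ ⊆ basicNbhd t ε :=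
  fun _ hu => ⟨hu.1, hu.2.trans_le (by linarith)⟩

lemma basicNbhd_subset_of_mem {t u : LambdaTree} {ε : ℝ} (hu : u ∈ basicNbhd t ε) :
    basicNbhd u (lamFn t + ε - lamFn u) ⊆ basicNbhd t ε :=
  fun _ hv => ⟨hu.1.trans hv.1, by linarith [hv.2]⟩

lemma isTopologicalBasis_basicNbhd :
    IsTopologicalBasis (α := LambdaSpace) {S | ∃ t ε, 0 < ε ∧ S = basicNbhd t ε} := by
  refine ⟨?_, eq_univ_of_forall fun u => mem_sUnion.2 ⟨_, ⟨u, 1, one_pos, rfl⟩,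
    mem_basicNbhd_self one_pos⟩, rfl⟩
  rintro _ ⟨t₁, ε₁, -, rfl⟩ _ ⟨t₂, ε₂, -, rfl⟩ u ⟨hu₁, hu₂⟩
  have hδ : 0 < min (lamFn t₁ + ε₁ - lamFn u) (lamFn t₂ + ε₂ - lamFn u) :=
    lt_min (by linarith [hu₁.2]) (by linarith [hu₂.2])
  refine ⟨_, ⟨u, _, hδ, rfl⟩, mem_basicNbhd_self hδ, subset_inter ?_ ?_⟩
  · exact (basicNbhd_mono u (min_le_left _ _)).trans (basicNbhd_subset_of_mem hu₁)
  · exact (basicNbhd_mono u (min_le_right _ _)).trans (basicNbhd_subset_of_mem hu₂)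

lemma isOpen_basicNbhd (t : LambdaTree) {ε : ℝ} (hε : 0 < ε) :
    IsOpen (X := LambdaSpace) (basicNbhd t ε) :=
  isTopologicalBasis_basicNbhd.isOpen ⟨t, ε, hε, rfl⟩

lemma exists_basicNbhd_subset {U : Set LambdaSpace} (hU : IsOpen U) {u : LambdaTree}
    (hu : u ∈ U) : ∃ δ, 0 < δ ∧ basicNbhd u δ ⊆ U := by
  obtain ⟨_, ⟨t, ε, -, rfl⟩, hut, htU⟩ :=
    isTopologicalBasis_basicNbhd.exists_subset_of_mem_open hu hU
  exact ⟨_, by linarith [hut.2], (basicNbhd_subset_of_mem hut).trans htU⟩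

lemma exists_basicNbhd_subset_inter {W : Set LambdaSpace} (hWo : IsOpen W) (hWd : Dense W)
    (n : ℕ) {x : LambdaTree} {ε : ℝ} (hε : 0 < ε) :
    ∃ y δ, 0 < δ ∧ basicNbhd y δ ⊆ W ∩ basicNbhd x ε ∧
      ∃ m, n ≤ m ∧ m ∉ ran y ∧ δ ≤ (1 / 2 : ℝ) ^ m := by
  obtain ⟨y, hyx, hyW⟩ :=
    hWd.inter_open_nonempty _ (isOpen_basicNbhd x hε) ⟨x, mem_basicNbhd_self hε⟩
  obtain ⟨δ, hδ, hδW⟩ := exists_basicNbhd_subset (hWo.inter (isOpen_basicNbhd x hε)) ⟨hyW, hyx⟩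
  obtain ⟨m, hmy, hnm⟩ := y.2.2.2.2.exists_gt n
  exact ⟨y, min δ ((1 / 2) ^ m), lt_min hδ (by positivity),
    (basicNbhd_mono y (min_le_left _ _)).trans hδW, m, hnm.le, hmy, min_le_right _ _⟩

theorem exists_mem_basicNbhd_of_nested {x : ℕ → LambdaTree} {ε : ℕ → ℝ} (hε : ∀ n, 0 < ε n)
    (hnest : ∀ n, basicNbhd (x (n + 1)) (ε (n + 1)) ⊆ basicNbhd (x n) (ε n / 2))
    (hgap : ∀ n, ∃ m, n ≤ m ∧ m ∉ ran (x n) ∧ ε n ≤ (1 / 2 : ℝ) ^ m) :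
    ∃ u, ∀ n, u ∈ basicNbhd (x n) (ε n) := by
  choose m hnm hmx hεm using hgap
  have hanti : Antitone fun n => basicNbhd (x n) (ε n) := antitone_nat_of_succ_le fun n =>
    (hnest n).trans (basicNbhd_mono _ (half_le_self (hε n).le))
  have hclose : ∀ n k, n ≤ k → x k ∈ basicNbhd (x n) (ε n / 2) := by
    intro n k hnk
    rcases hnk.eq_or_lt with rfl | hlt
    · exact mem_basicNbhd_self (half_pos (hε n))
    · exact hnest n (hanti hlt (mem_basicNbhd_self (hε k)))
  have hmono : Monotone x := fun n k h => (hclose n k h).1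
  have hmiss : ∀ n k, m n ∉ ran (x k) := by
    intro n k hk
    rcases le_total k n with hkn | hnk
    · exact hmx n (ran_mono (hmono hkn) hk)
    · linarith [lamFn_add_le_of_mem (hmono hnk) hk (hmx n), (hclose n k hnk).2, hεm n, hε n]
  have hcoinf : (⋃ n, ran (x n))ᶜ.Infinite := by
    refine (infinite_of_not_bddAbove (s := range m) ?_).mono ?_
    · exact not_bddAbove_iff.2 fun b => ⟨m (b + 1), mem_range_self _, by linarith [hnm (b + 1)]⟩
    · rintro _ ⟨n, rfl⟩
      simpa using (hmiss n ·)
  obtain ⟨u, hxu, hu⟩ := exists_ub_ran_eq_iUnion hmono hcoinf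
  have hlim : Tendsto (fun n => lamFn (x n)) atTop (𝓝 (lamFn u)) := by
    simpa only [lamFn_eq_dyadicWeight, hu] using
      tendsto_dyadicWeight_iUnion (A := fun n => ran (x n)) (ran_mono.comp hmono)
  refine ⟨u, fun n => ⟨hxu n, ?_⟩⟩
  have hle : lamFn u ≤ lamFn (x n) + ε n / 2 :=
    le_of_tendsto hlim (eventually_atTop.2 ⟨n, fun k hk => (hclose n k hk).2.le⟩)
  linarith [hε n]

end LambdaSpace

open LambdaSpace in
/-- Lemma 10.1: `Λ` with the λ-topology is a Baire space. -/
theorem statement16 : BaireSpace LambdaSpace := by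
  refine ⟨fun W hWo hWd => dense_iff_inter_open.2 fun U hUo ⟨x₀, hx₀⟩ => ?_⟩
  obtain ⟨ε₀, hε₀, hU⟩ := exists_basicNbhd_subset hUo hx₀
  have : Nonempty LambdaTree := ⟨x₀⟩
  choose! y δ hδ hsub hgap using fun n x (ε : ℝ) (hε : 0 < ε) =>
    exists_basicNbhd_subset_inter (hWo n) (hWd n) n (x := x) (half_pos hε)
  let seq : ℕ → LambdaTree × ℝ := fun n =>
    Nat.rec (x₀, ε₀) (fun n p => (y n p.1 p.2, δ n p.1 p.2)) n
  have hpos : ∀ n, 0 < (seq n).2 := by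
    intro n
    induction n with
    | zero => exact hε₀
    | succ n ih => exact hδ n _ _ ih
  obtain ⟨u, hu⟩ := exists_mem_basicNbhd_of_nested (x := fun n => (seq (n + 1)).1)
    (fun n => hpos (n + 1)) (fun n => (hsub (n + 1) _ _ (hpos (n + 1))).trans inter_subset_right)
    (fun n => hgap n _ _ (hpos n))
  refine ⟨u, hU (basicNbhd_mono x₀ (half_le_self hε₀.le) (hsub 0 _ _ hε₀ (hu 0)).2), ?_⟩
  exact mem_iInter.2 fun n => (hsub n _ _ (hpos n) (hu n)).1
end
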